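/- arXiv:0803.0853 — 10 statements merged into one kernel-verified Lean document; each statement's English description precedes it below -/
import Mathlib

section
/- Let Q be a unital quantale with unit e. Define on the opposite lattice Q^op the zero multiplication c₁·c₂ = 0, the Q-actions a·c' = (a → c)' and c'·a = (c ← a)' (where a → c = ⋁{x : x·a ≤ c} and c ← a = ⋁{x : a·x ≤ c}), and φ = 0 (the constant bottom map). Then (Q^op, Q, φ) is a couple of quantales, and the element e' ∈ Q^op is a cyclic dualizing element; in particular, for every a ∈ Q, a → e' computed in this couple equals a' (the element a viewed in Q^op). -/
/-- A quantale: a complete lattice with an associative multiplication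
distributing over arbitrary joins in both variables. -/
class Quantale' (α : Type*) extends CompleteLattice α, Mul α where
  mul_assoc : ∀ a b c : α, a * b * c = a * (b * c)
  mul_sSup : ∀ (a : α) (s : Set α), a * sSup s = ⨆ b ∈ s, a * b
  sSup_mul : ∀ (s : Set α) (a : α), sSup s * a = ⨆ b ∈ s, b * a

/-- A couple of quantales: a quantale `Q`, a quantale `C` which is also a
`Q`-bimodule, and a coupling map `φ : C → Q` which is a join-preserving
`Q`-bimodule homomorphism satisfying `φ(c₁)·c₂ = c₁·φ(c₂) = c₁·c₂`. -/
structure Couple (C Q : Type*) [Quantale' C] [Quantale' Q] where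
  φ : C → Q
  /-- the left action of `Q` on `C` -/
  act : Q → C → C
  /-- the right action of `Q` on `C` -/
  actr : C → Q → C
  act_sSup : ∀ (a : Q) (s : Set C), act a (sSup s) = ⨆ c ∈ s, act a c
  sSup_act : ∀ (s : Set Q) (c : C), act (sSup s) c = ⨆ a ∈ s, act a c
  actr_sSup : ∀ (c : C) (s : Set Q), actr c (sSup s) = ⨆ a ∈ s, actr c a
  sSup_actr : ∀ (s : Set C) (a : Q), actr (sSup s) a = ⨆ c ∈ s, actr c a
  act_mul : ∀ (a b : Q) (c : C), act (a * b) c = act a (act b c)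
  actr_mul : ∀ (c : C) (a b : Q), actr c (a * b) = actr (actr c a) b
  act_actr : ∀ (a : Q) (c : C) (b : Q), actr (act a c) b = act a (actr c b)
  φ_sSup : ∀ s : Set C, φ (sSup s) = ⨆ c ∈ s, φ c
  φ_act : ∀ (a : Q) (c : C), φ (act a c) = a * φ c
  φ_actr : ∀ (c : C) (a : Q), φ (actr c a) = φ c * a
  couple_left : ∀ c₁ c₂ : C, act (φ c₁) c₂ = c₁ * c₂
  couple_right : ∀ c₁ c₂ : C, actr c₁ (φ c₂) = c₁ * c₂

/-- A Girard couple: a couple together with a cyclic dualizing element `d ∈ C`. -/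
structure GirardCouple (C Q : Type*) [Quantale' C] [Quantale' Q] extends Couple C Q where
  d : C
  cyclic : ∀ (a : Q) (c : C), act a c ≤ d ↔ actr c a ≤ d
  /-- `d ⧸ (a → d) = a` for `a ∈ Q` -/
  dualizing_Q₁ : ∀ a : Q, sSup {b : Q | act b (sSup {c : C | actr c a ≤ d}) ≤ d} = a
  /-- `(d ⧸ a) → d = a` for `a ∈ Q` -/
  dualizing_Q₂ : ∀ a : Q, sSup {b : Q | actr (sSup {c : C | act a c ≤ d}) b ≤ d} = a
  /-- `d ⧸ (c → d) = c` for `c ∈ C` -/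
  dualizing_C₁ : ∀ c : C, sSup {c' : C | act (sSup {a : Q | actr c a ≤ d}) c' ≤ d} = c
  /-- `(d ⧸ c) → d = c` for `c ∈ C` -/
  dualizing_C₂ : ∀ c : C, sSup {c' : C | actr c' (sSup {a : Q | act a c ≤ d}) ≤ d} = c

/-- The opposite lattice of a quantale, equipped with the zero multiplication. -/
instance opZeroQuantale {Q : Type*} [Quantale' Q] : Quantale' Qᵒᵈ where
  __ := (inferInstance : CompleteLattice Qᵒᵈ)
  mul := fun _ _ => ⊥
  mul_assoc := fun _ _ _ => rfl
  mul_sSup := by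
    intro a s; show (⊥ : Qᵒᵈ) = ⨆ b ∈ s, (⊥ : Qᵒᵈ); simp
  sSup_mul := by
    intro s a; show (⊥ : Qᵒᵈ) = ⨆ b ∈ s, (⊥ : Qᵒᵈ); simp


/-!
Reading `Qᵒᵈ` in `Q`, the action `c ↦ a · c` is the right adjoint `a ⇨ₗ ·` of `· * a`, so each
bimodule law becomes, after testing against all `z`, associativity or join-distributivity in `Q`;
the zero multiplication of `Qᵒᵈ` and `φ = ⊥` fit together because `⊥ ⇨ₗ c = ⊤`. With the unit,
`a · c' ≤ e'` holds iff `e * a ≤ c`, i.e. iff `a ≤ c`, and likewise on the right, so every residual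
against `e'` is the join of a principal down-set and returns the element it started from.
-/

theorem sSup_setOf_le {α : Type*} [CompleteLattice α] (a : α) : sSup {b | b ≤ a} = a :=
  isGreatest_Iic.csSup_eq

theorem sSup_setOf_le_ofDual {α : Type*} [CompleteLattice α] (a : α) :
    sSup {c : αᵒᵈ | a ≤ OrderDual.ofDual c} = OrderDual.toDual a :=
  isGreatest_Iic.csSup_eq

instance Quantale'.toSemigroup {Q : Type*} [Quantale' Q] : Semigroup Q where
  mul_assoc := Quantale'.mul_assoc

instance Quantale'.toIsQuantale {Q : Type*} [Quantale' Q] : IsQuantale Q where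
  mul_sSup_distrib := Quantale'.mul_sSup
  sSup_mul_distrib := Quantale'.sSup_mul

namespace Quantale'

open Quantale OrderDual

variable {Q : Type*} [Quantale' Q]

-- `a ⇨ₗ c` and `a ⇨ᵣ c` are the residuals written `a → c` and `c ← a` in the paper.
def dualAct (a : Q) (c : Qᵒᵈ) : Qᵒᵈ := toDual (a ⇨ₗ ofDual c)

def dualActr (c : Qᵒᵈ) (a : Q) : Qᵒᵈ := toDual (a ⇨ᵣ ofDual c)

theorem le_ofDual_dualAct_iff {a x : Q} {c : Qᵒᵈ} : x ≤ ofDual (dualAct a c) ↔ x * a ≤ ofDual c :=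
  leftMulResiduation_le_iff_mul_le

theorem le_ofDual_dualActr_iff {a x : Q} {c : Qᵒᵈ} : x ≤ ofDual (dualActr c a) ↔ a * x ≤ ofDual c :=
  rightMulResiduation_le_iff_mul_le

theorem dualAct_le_iff {a : Q} {c z : Qᵒᵈ} : dualAct a c ≤ z ↔ ofDual z * a ≤ ofDual c :=
  le_ofDual_dualAct_iff

theorem dualActr_le_iff {a : Q} {c z : Qᵒᵈ} : dualActr c a ≤ z ↔ a * ofDual z ≤ ofDual c :=
  le_ofDual_dualActr_iff

theorem dualAct_bot (c : Qᵒᵈ) : dualAct ⊥ c = ⊥ :=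
  le_bot_iff.1 <| dualAct_le_iff.2 <| by simp

theorem dualActr_bot (c : Qᵒᵈ) : dualActr c ⊥ = ⊥ :=
  le_bot_iff.1 <| dualActr_le_iff.2 <| by simp

variable (Q) in
def dualCouple : Couple Qᵒᵈ Q where
  φ _ := ⊥
  act := dualAct
  actr := dualActr
  act_sSup a s := eq_of_forall_ge_iff fun z => by
    simp [dualAct_le_iff]
  sSup_act s c := eq_of_forall_ge_iff fun z => by
    simp [dualAct_le_iff, mul_sSup_distrib]
  actr_sSup c s := eq_of_forall_ge_iff fun z => by
    simp [dualActr_le_iff, sSup_mul_distrib]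
  sSup_actr s a := eq_of_forall_ge_iff fun z => by
    simp [dualActr_le_iff]
  act_mul a b c := eq_of_forall_ge_iff fun z => by
    simp only [dualAct_le_iff, le_ofDual_dualAct_iff, mul_assoc]
  actr_mul c a b := eq_of_forall_ge_iff fun z => by
    simp only [dualActr_le_iff, le_ofDual_dualActr_iff, mul_assoc]
  act_actr a c b := eq_of_forall_ge_iff fun z => by
    simp only [dualAct_le_iff, dualActr_le_iff, le_ofDual_dualAct_iff, le_ofDual_dualActr_iff,
      mul_assoc]
  φ_sSup s := by simp
  φ_act a _ := mul_bot.symm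
  φ_actr _ a := bot_mul.symm
  couple_left _ c := dualAct_bot c
  couple_right c _ := dualActr_bot c

section Unit

variable {e : Q}

theorem dualAct_le_toDual_iff (he : ∀ a : Q, e * a = a) {a : Q} {c : Qᵒᵈ} :
    dualAct a c ≤ toDual e ↔ a ≤ ofDual c := by
  rw [dualAct_le_iff, ofDual_toDual, he]

theorem dualActr_le_toDual_iff (he : ∀ a : Q, a * e = a) {a : Q} {c : Qᵒᵈ} :
    dualActr c a ≤ toDual e ↔ a ≤ ofDual c := by
  rw [dualActr_le_iff, ofDual_toDual, he]

variable (e) in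
def dualGirardCouple (mul_e : ∀ a : Q, a * e = a) (e_mul : ∀ a : Q, e * a = a) :
    GirardCouple Qᵒᵈ Q where
  toCouple := dualCouple Q
  d := toDual e
  cyclic _ _ := (dualAct_le_toDual_iff e_mul).trans (dualActr_le_toDual_iff mul_e).symm
  dualizing_Q₁ _ := by
    simp only [dualCouple, dualAct_le_toDual_iff e_mul, dualActr_le_toDual_iff mul_e,
      sSup_setOf_le_ofDual, ofDual_toDual, sSup_setOf_le]
  dualizing_Q₂ _ := by
    simp only [dualCouple, dualAct_le_toDual_iff e_mul, dualActr_le_toDual_iff mul_e,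
      sSup_setOf_le_ofDual, ofDual_toDual, sSup_setOf_le]
  dualizing_C₁ _ := by
    simp only [dualCouple, dualAct_le_toDual_iff e_mul, dualActr_le_toDual_iff mul_e,
      sSup_setOf_le, sSup_setOf_le_ofDual, toDual_ofDual]
  dualizing_C₂ _ := by
    simp only [dualCouple, dualAct_le_toDual_iff e_mul, dualActr_le_toDual_iff mul_e,
      sSup_setOf_le, sSup_setOf_le_ofDual, toDual_ofDual]

end Unit

end Quantale'

/-- For a unital quantale `Q` with unit `e`, the opposite lattice `Qᵒᵈ` with the
zero multiplication, the residuation actions `a·c' = (a → c)'`, `c'·a = (c ← a)'`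
and the zero coupling map form a Girard couple with cyclic dualizing element `e'`;
in particular `a → e' = a'` for every `a`. -/
theorem stmt4 {Q : Type*} [Quantale' Q] (e : Q)
    (he : ∀ a : Q, a * e = a ∧ e * a = a) :
    ∃ gc : GirardCouple Qᵒᵈ Q,
      gc.φ = (fun _ => (⊥ : Q)) ∧
      gc.act = (fun a c => OrderDual.toDual (sSup {x : Q | x * a ≤ OrderDual.ofDual c})) ∧
      gc.actr = (fun c a => OrderDual.toDual (sSup {x : Q | a * x ≤ OrderDual.ofDual c})) ∧
      gc.d = OrderDual.toDual e ∧
      ∀ a : Q, sSup {c : Qᵒᵈ | gc.actr c a ≤ gc.d} = OrderDual.toDual a := by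
  have mul_e a := (he a).1
  refine ⟨Quantale'.dualGirardCouple e mul_e fun a => (he a).2, rfl, rfl, rfl, rfl, fun a => ?_⟩
  simp only [Quantale'.dualGirardCouple, Quantale'.dualCouple,
    Quantale'.dualActr_le_toDual_iff mul_e, sSup_setOf_le_ofDual]
end

section
/- Let C → Q (with map φ) be a Girard couple with cyclic dualizing element d. Then φ is self-adjoint: for all c₁, c₂ ∈ C, φ(c₁) ≤ c₂^⊥ if and only if c₁ ≤ φ(c₂)^⊥, where for a ∈ Q, a^⊥ = ⋁{c ∈ C : a·c ≤ d} and for c ∈ C, c^⊥ = ⋁{a ∈ Q : a·c ≤ d}. -/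
/-! Both sides are adjunction statements for the join-preserving actions: the left one says
`φ(c₁)·c₂ ≤ d` and the right one `φ(c₂)·c₁ ≤ d`. The coupling laws identify `φ(c₁)·c₂` and
`c₁·φ(c₂)` with `c₁·c₂`, and cyclicity of `d` moves `φ(c₂)` from the right of `c₁` to the left. -/

section JoinPreserving

variable {α β : Type*} [CompleteLattice α] [CompleteLattice β] {f : α → β}

theorem monotone_of_map_sSup (hf : ∀ s, f (sSup s) = ⨆ x ∈ s, f x) : Monotone f := by
  intro a b hab
  calc f a ≤ ⨆ x ∈ ({a, b} : Set α), f x := le_iSup₂_of_le a (by simp) le_rfl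
    _ = f b := by rw [← hf, sSup_pair, sup_eq_right.mpr hab]

theorem le_sSup_setOf_map_le_iff (hf : ∀ s, f (sSup s) = ⨆ x ∈ s, f x) {a : α} {d : β} :
    a ≤ sSup {x | f x ≤ d} ↔ f a ≤ d := by
  refine ⟨fun h => ?_, fun h => le_sSup h⟩
  calc f a ≤ f (sSup {x | f x ≤ d}) := monotone_of_map_sSup hf h
    _ = ⨆ x ∈ {x | f x ≤ d}, f x := hf _
    _ ≤ d := iSup₂_le fun _ hx => hx

end JoinPreserving

/-- The coupling map of a Girard couple is self-adjoint. -/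
theorem stmt6 {C Q : Type*} [Quantale' C] [Quantale' Q] (gc : GirardCouple C Q)
    (c₁ c₂ : C) :
    gc.φ c₁ ≤ sSup {a : Q | gc.act a c₂ ≤ gc.d} ↔
    c₁ ≤ sSup {c : C | gc.act (gc.φ c₂) c ≤ gc.d} := by
  rw [le_sSup_setOf_map_le_iff (gc.sSup_act · c₂), le_sSup_setOf_map_le_iff (gc.act_sSup (gc.φ c₂)),
    gc.cyclic, gc.couple_right, ← gc.couple_left]
end

section
/- Let C → Q (with map φ) be a strong couple of semiunital quantales. Then φ restricts to an order isomorphism between the right-sided elements of C and the right-sided elements of Q, with inverse r ↦ r·1_C (the action of r ∈ R(Q) on the top element of C); similarly for left-sided elements. -/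
/-! Everything rests on the identity `φ(r) · ⊤_C = r · ⊤_C = r · φ(⊤_C) = r · ⊤_Q`, obtained from the two
coupling laws: for a strong couple and semiunital `C` it returns every right-sided `r`, and applying
`φ` to `s · ⊤_C` gives `s · φ(⊤_C) = s · ⊤_Q = s` for right-sided `s` in `Q`. Order reflection then
follows because `φ` and the actions, preserving joins, are monotone. The left-sided case is the
mirror image. -/

theorem monotone_of_map_sSup_s7 {α β : Type*} [CompleteLattice α] [CompleteLattice β] {f : α → β}
    (hf : ∀ s : Set α, f (sSup s) = ⨆ a ∈ s, f a) : Monotone f := by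
  intro a b hab
  calc f a ≤ ⨆ c ∈ ({a, b} : Set α), f c := le_iSup₂ (f := fun c _ => f c) a (by simp)
    _ = f b := by rw [← hf, sSup_pair, sup_eq_right.mpr hab]

namespace Couple

variable {C Q : Type*} [Quantale' C] [Quantale' Q] (cp : Couple C Q)

theorem φ_mono : Monotone cp.φ := monotone_of_map_sSup_s7 cp.φ_sSup

theorem act_mono_left (c : C) : Monotone (cp.act · c) :=
  monotone_of_map_sSup_s7 (cp.sSup_act · c)

theorem act_mono_right (a : Q) : Monotone (cp.act a) := monotone_of_map_sSup_s7 (cp.act_sSup a)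

theorem actr_mono_left (a : Q) : Monotone (cp.actr · a) :=
  monotone_of_map_sSup_s7 (cp.sSup_actr · a)

theorem actr_mono_right (c : C) : Monotone (cp.actr c) := monotone_of_map_sSup_s7 (cp.actr_sSup c)

theorem φ_mul_top_le {r : C} (hr : cp.actr r ⊤ ≤ r) : cp.φ r * ⊤ ≤ cp.φ r :=
  cp.φ_actr r ⊤ ▸ cp.φ_mono hr

theorem actr_act_top_le (s : Q) : cp.actr (cp.act s ⊤) ⊤ ≤ cp.act s ⊤ :=
  cp.act_actr s ⊤ ⊤ ▸ cp.act_mono_right s le_top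

theorem φ_act_top (hstrong : cp.φ ⊤ = ⊤) {s : Q} (hs : s * ⊤ = s) : cp.φ (cp.act s ⊤) = s := by
  rw [cp.φ_act, hstrong, hs]

theorem act_φ_top (hstrong : cp.φ ⊤ = ⊤) {r : C} (hr : cp.actr r ⊤ = r) :
    cp.act (cp.φ r) ⊤ = r := by
  rw [cp.couple_left, ← cp.couple_right, hstrong, hr]

theorem φ_le_φ_iff_of_actr_top (hstrong : cp.φ ⊤ = ⊤) {r₁ r₂ : C}
    (h₁ : cp.actr r₁ ⊤ = r₁) (h₂ : cp.actr r₂ ⊤ = r₂) : cp.φ r₁ ≤ cp.φ r₂ ↔ r₁ ≤ r₂ := by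
  refine ⟨fun h => ?_, fun h => cp.φ_mono h⟩
  rw [← cp.act_φ_top hstrong h₁, ← cp.act_φ_top hstrong h₂]
  exact cp.act_mono_left ⊤ h

theorem top_mul_φ_le {l : C} (hl : cp.act ⊤ l ≤ l) : ⊤ * cp.φ l ≤ cp.φ l :=
  cp.φ_act ⊤ l ▸ cp.φ_mono hl

theorem act_actr_top_le (t : Q) : cp.act ⊤ (cp.actr ⊤ t) ≤ cp.actr ⊤ t :=
  cp.act_actr ⊤ ⊤ t ▸ cp.actr_mono_left t le_top

theorem φ_actr_top (hstrong : cp.φ ⊤ = ⊤) {t : Q} (ht : ⊤ * t = t) :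
    cp.φ (cp.actr ⊤ t) = t := by
  rw [cp.φ_actr, hstrong, ht]

theorem actr_top_φ (hstrong : cp.φ ⊤ = ⊤) {l : C} (hl : cp.act ⊤ l = l) :
    cp.actr ⊤ (cp.φ l) = l := by
  rw [cp.couple_right, ← cp.couple_left, hstrong, hl]

theorem φ_le_φ_iff_of_act_top (hstrong : cp.φ ⊤ = ⊤) {l₁ l₂ : C}
    (h₁ : cp.act ⊤ l₁ = l₁) (h₂ : cp.act ⊤ l₂ = l₂) : cp.φ l₁ ≤ cp.φ l₂ ↔ l₁ ≤ l₂ := by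
  refine ⟨fun h => ?_, fun h => cp.φ_mono h⟩
  rw [← cp.actr_top_φ hstrong h₁, ← cp.actr_top_φ hstrong h₂]
  exact cp.actr_mono_right ⊤ h

end Couple

/-- For a strong couple of semiunital quantales, `φ` restricts to an order
isomorphism between the right-sided (resp. left-sided) elements of `C` and of
`Q`, with inverse `r ↦ r·1_C` (resp. `l ↦ 1_C·l`). -/
theorem stmt7 {C Q : Type*} [Quantale' C] [Quantale' Q] (cp : Couple C Q)
    (hstrong : cp.φ ⊤ = ⊤)
    (hQr : ∀ r : Q, r * ⊤ ≤ r → r * ⊤ = r)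
    (hQl : ∀ l : Q, ⊤ * l ≤ l → ⊤ * l = l)
    (hCr : ∀ r : C, cp.actr r ⊤ ≤ r → cp.actr r ⊤ = r)
    (hCl : ∀ l : C, cp.act ⊤ l ≤ l → cp.act ⊤ l = l) :
    -- right-sided part
    ((∀ r : C, cp.actr r ⊤ ≤ r → cp.φ r * ⊤ ≤ cp.φ r) ∧
     (∀ s : Q, s * ⊤ ≤ s → cp.actr (cp.act s ⊤) ⊤ ≤ cp.act s ⊤) ∧
     (∀ s : Q, s * ⊤ ≤ s → cp.φ (cp.act s ⊤) = s) ∧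
     (∀ r : C, cp.actr r ⊤ ≤ r → cp.act (cp.φ r) ⊤ = r) ∧
     (∀ r₁ r₂ : C, cp.actr r₁ ⊤ ≤ r₁ → cp.actr r₂ ⊤ ≤ r₂ →
        (cp.φ r₁ ≤ cp.φ r₂ ↔ r₁ ≤ r₂))) ∧
    -- left-sided part
    ((∀ l : C, cp.act ⊤ l ≤ l → ⊤ * cp.φ l ≤ cp.φ l) ∧
     (∀ t : Q, ⊤ * t ≤ t → cp.act ⊤ (cp.actr ⊤ t) ≤ cp.actr ⊤ t) ∧
     (∀ t : Q, ⊤ * t ≤ t → cp.φ (cp.actr ⊤ t) = t) ∧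
     (∀ l : C, cp.act ⊤ l ≤ l → cp.actr ⊤ (cp.φ l) = l) ∧
     (∀ l₁ l₂ : C, cp.act ⊤ l₁ ≤ l₁ → cp.act ⊤ l₂ ≤ l₂ →
        (cp.φ l₁ ≤ cp.φ l₂ ↔ l₁ ≤ l₂))) := by
  refine ⟨⟨fun r hr => cp.φ_mul_top_le hr, fun s _ => cp.actr_act_top_le s,
      fun s hs => cp.φ_act_top hstrong (hQr s hs), fun r hr => cp.act_φ_top hstrong (hCr r hr),
      fun r₁ r₂ h₁ h₂ => cp.φ_le_φ_iff_of_actr_top hstrong (hCr r₁ h₁) (hCr r₂ h₂)⟩,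
    ⟨fun l hl => cp.top_mul_φ_le hl, fun t _ => cp.act_actr_top_le t,
      fun t ht => cp.φ_actr_top hstrong (hQl t ht), fun l hl => cp.actr_top_φ hstrong (hCl l hl),
      fun l₁ l₂ h₁ h₂ => cp.φ_le_φ_iff_of_act_top hstrong (hCl l₁ h₁) (hCl l₂ h₂)⟩⟩
end

section
/- Let C → Q (with map φ) be a Girard couple with cyclic dualizing element d. Then e := d^⊥ = ⋁{a ∈ Q : a·d ≤ d} is a two-sided unit for the multiplication of Q, and e acts as a unit on the Q-bimodule C: e·c = c·e = c for all c ∈ C. In particular every Girard couple is unital. -/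
/-!
Dualizing means that an element is determined by which products with it lie below `d`:
`c` is recovered from `{a | c·a ≤ d}`, or from `{a | a·c ≤ d}`, and `a ∈ Q` from `{c | c·a ≤ d}`.
By cyclicity `e = d^⊥` equals `d → d`, so dualizing at `d` gives `e·x ≤ d ↔ x ≤ d`.
Hence `e·c` and `c` (likewise `c·e` and `c`, then `e·a`, `a·e` and `a`) have the same products
below `d`, so they are equal.
-/

namespace Couple

variable {C Q : Type*} [Quantale' C] [Quantale' Q] (κ : Couple C Q)

theorem act_mono (a : Q) : Monotone (κ.act a) := fun c c' h =>
  calc κ.act a c ≤ ⨆ x ∈ ({c, c'} : Set C), κ.act a x :=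
        le_iSup₂_of_le c (Set.mem_insert _ _) le_rfl
    _ = κ.act a c' := by rw [← κ.act_sSup, sSup_pair, sup_eq_right.mpr h]

end Couple

namespace GirardCouple

variable {C Q : Type*} [Quantale' C] [Quantale' Q] (gc : GirardCouple C Q)

def unit : Q := sSup {b : Q | gc.act b gc.d ≤ gc.d}

theorem eq_of_forall_actr_le_iff {c c' : C}
    (h : ∀ a, gc.actr c a ≤ gc.d ↔ gc.actr c' a ≤ gc.d) : c = c' := by
  have hset : {a | gc.actr c a ≤ gc.d} = {a | gc.actr c' a ≤ gc.d} := Set.ext h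
  rw [← gc.dualizing_C₁ c, hset, gc.dualizing_C₁]

theorem eq_of_forall_act_le_iff {c c' : C}
    (h : ∀ a, gc.act a c ≤ gc.d ↔ gc.act a c' ≤ gc.d) : c = c' := by
  have hset : {a | gc.act a c ≤ gc.d} = {a | gc.act a c' ≤ gc.d} := Set.ext h
  rw [← gc.dualizing_C₂ c, hset, gc.dualizing_C₂]

theorem scalar_eq_of_forall_actr_le_iff {a b : Q}
    (h : ∀ c, gc.actr c a ≤ gc.d ↔ gc.actr c b ≤ gc.d) : a = b := by
  have hset : {c | gc.actr c a ≤ gc.d} = {c | gc.actr c b ≤ gc.d} := Set.ext h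
  rw [← gc.dualizing_Q₁ a, hset, gc.dualizing_Q₁]

theorem unit_act_le_iff (c : C) : gc.act gc.unit c ≤ gc.d ↔ c ≤ gc.d := by
  constructor
  · intro h
    have hunit : gc.unit = sSup {a | gc.actr gc.d a ≤ gc.d} :=
      congrArg sSup (Set.ext fun a => gc.cyclic a gc.d)
    calc c ≤ sSup {c' | gc.act (sSup {a | gc.actr gc.d a ≤ gc.d}) c' ≤ gc.d} :=
          le_sSup (hunit ▸ h)
      _ = gc.d := gc.dualizing_C₁ gc.d
  · intro h
    have hunit_d : gc.act gc.unit gc.d ≤ gc.d := by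
      rw [unit, gc.sSup_act]
      exact iSup₂_le fun b hb => hb
    exact (gc.act_mono gc.unit h).trans hunit_d

theorem actr_unit_le_iff (c : C) : gc.actr c gc.unit ≤ gc.d ↔ c ≤ gc.d := by
  rw [← gc.cyclic, unit_act_le_iff]

theorem unit_act (c : C) : gc.act gc.unit c = c :=
  gc.eq_of_forall_actr_le_iff fun a => by rw [gc.act_actr, unit_act_le_iff]

theorem actr_unit (c : C) : gc.actr c gc.unit = c :=
  gc.eq_of_forall_act_le_iff fun a => by rw [← gc.act_actr, actr_unit_le_iff]

theorem unit_mul (a : Q) : gc.unit * a = a :=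
  gc.scalar_eq_of_forall_actr_le_iff fun c => by rw [gc.actr_mul, actr_unit]

theorem mul_unit (a : Q) : a * gc.unit = a :=
  gc.scalar_eq_of_forall_actr_le_iff fun c => by rw [gc.actr_mul, actr_unit]

end GirardCouple

/-- In a Girard couple, `e = d^⊥` is a unit for `Q` and acts as a unit on `C`;
in particular every Girard couple is unital. -/
theorem stmt8 {C Q : Type*} [Quantale' C] [Quantale' Q] (gc : GirardCouple C Q) :
    (∀ a : Q, sSup {b : Q | gc.act b gc.d ≤ gc.d} * a = a ∧
              a * sSup {b : Q | gc.act b gc.d ≤ gc.d} = a) ∧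
    (∀ c : C, gc.act (sSup {b : Q | gc.act b gc.d ≤ gc.d}) c = c ∧
              gc.actr c (sSup {b : Q | gc.act b gc.d ≤ gc.d}) = c) :=
  ⟨fun a => ⟨gc.unit_mul a, gc.mul_unit a⟩, fun c => ⟨gc.unit_act c, gc.actr_unit c⟩⟩
end

section
/- Let C → Q be a Girard couple with cyclic dualizing element d ∈ C. Then the only right-sided element of C below d is 0, and the only left-sided element of C below d is 0. -/
/-
Both dualities `c ↦ c → d` and `c ↦ d ⧸ c` on `C` are injective, since `d` is dualizing.
If `c · ⊤ ≤ d` then `c → d = ⊤`, and the same holds for `c = ⊥`; hence `c = ⊥`. A right-sided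
element `r ≤ d` satisfies `r · ⊤ ≤ r ≤ d`. The left-sided case is symmetric.
-/

namespace Couple

variable {C Q : Type*} [Quantale' C] [Quantale' Q] (cp : Couple C Q)

theorem bot_actr (a : Q) : cp.actr ⊥ a = ⊥ := by
  simpa using cp.sSup_actr ∅ a

theorem act_bot (a : Q) : cp.act a ⊥ = ⊥ := by
  simpa using cp.act_sSup a ∅

end Couple

namespace GirardCouple

variable {C Q : Type*} [Quantale' C] [Quantale' Q] (gc : GirardCouple C Q)

/-- `c → d` in the notation of the dualizing axioms. -/
def rightDual (c : C) : Q := sSup {a : Q | gc.actr c a ≤ gc.d}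

/-- `d ⧸ c` in the notation of the dualizing axioms. -/
def leftDual (c : C) : Q := sSup {a : Q | gc.act a c ≤ gc.d}

theorem rightDual_injective : Function.Injective gc.rightDual := by
  intro c c' h
  rw [← gc.dualizing_C₁ c, ← gc.dualizing_C₁ c']
  exact congrArg (fun a => sSup {x : C | gc.act a x ≤ gc.d}) h

theorem leftDual_injective : Function.Injective gc.leftDual := by
  intro c c' h
  rw [← gc.dualizing_C₂ c, ← gc.dualizing_C₂ c']
  exact congrArg (fun a => sSup {x : C | gc.actr x a ≤ gc.d}) h

theorem rightDual_eq_top {c : C} (h : gc.actr c ⊤ ≤ gc.d) : gc.rightDual c = ⊤ :=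
  top_unique (le_sSup h)

theorem leftDual_eq_top {c : C} (h : gc.act ⊤ c ≤ gc.d) : gc.leftDual c = ⊤ :=
  top_unique (le_sSup h)

theorem eq_bot_of_actr_top_le {c : C} (h : gc.actr c ⊤ ≤ gc.d) : c = ⊥ :=
  gc.rightDual_injective <| by
    rw [gc.rightDual_eq_top h, gc.rightDual_eq_top ((gc.bot_actr ⊤).trans_le bot_le)]

theorem eq_bot_of_act_top_le {c : C} (h : gc.act ⊤ c ≤ gc.d) : c = ⊥ :=
  gc.leftDual_injective <| by
    rw [gc.leftDual_eq_top h, gc.leftDual_eq_top ((gc.act_bot ⊤).trans_le bot_le)]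

end GirardCouple

/-- In a Girard couple, the only right- or left-sided element of `C`
below the cyclic dualizing element `d` is `0`. -/
theorem stmt9 {C Q : Type*} [Quantale' C] [Quantale' Q] (gc : GirardCouple C Q) :
    (∀ r : C, gc.actr r ⊤ ≤ r → r ≤ gc.d → r = ⊥) ∧
    (∀ l : C, gc.act ⊤ l ≤ l → l ≤ gc.d → l = ⊥) :=
  ⟨fun _ hr hrd => gc.eq_bot_of_actr_top_le (hr.trans hrd),
    fun _ hl hld => gc.eq_bot_of_act_top_le (hl.trans hld)⟩
end

section
/- Every Girard quantale is a von Neumann quantale, and the Girard duality a ↦ a → d restricts on right-sided elements to the von Neumann duality: for right-sided r, r → d = r → 0, and for left-sided l, d ⧸ l = 0 ⧸ l. -/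
/-!
Cyclicity of `d` makes the two residuals `a ⇨ₗ d` and `a ⇨ᵣ d` equal, so the dualizing law says
that `a ↦ a ⇨ₗ d` is an involution. It sends `⊥` to `⊤`, hence `⊤ ⇨ₗ d = ⊥`: no nonzero one-sided
element lies below `d`. For right-sided `r` every `x * r` is right-sided, so `x * r ≤ d` forces
`x * r = ⊥`, i.e. `r ⇨ₗ d = r ⇨ₗ ⊥`, and dually for left-sided elements. Since annihilators
`a ⇨ₗ ⊥` are always left-sided (and `a ⇨ᵣ ⊥` right-sided), the von Neumann duality is the
restriction of the Girard involution.
-/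

class GQuantale (α : Type*) extends CompleteLattice α, Mul α where
  mul_assoc : ∀ a b c : α, a * b * c = a * (b * c)
  mul_sSup : ∀ (a : α) (s : Set α), a * sSup s = ⨆ b ∈ s, a * b
  sSup_mul : ∀ (s : Set α) (a : α), sSup s * a = ⨆ b ∈ s, b * a

namespace GQuantale

variable {Q : Type*} [GQuantale Q]

instance : Semigroup Q where
  mul_assoc := GQuantale.mul_assoc

instance : IsQuantale Q := ⟨GQuantale.mul_sSup, GQuantale.sSup_mul⟩

end GQuantale

open Quantale

section

variable {Q : Type*} [Semigroup Q] [CompleteLattice Q] {d : Q}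

def IsRightSided (r : Q) : Prop := r * ⊤ ≤ r

def IsLeftSided (l : Q) : Prop := ⊤ * l ≤ l

def IsCyclicElement (d : Q) : Prop := ∀ a b : Q, a * b ≤ d ↔ b * a ≤ d

theorem IsCyclicElement.rightMulResiduation_eq (hd : IsCyclicElement d) (a : Q) :
    a ⇨ᵣ d = a ⇨ₗ d := by
  simp only [leftMulResiduation, rightMulResiduation, hd a]

theorem IsCyclicElement.leftMulResiduation_rightMulResiduation (hd : IsCyclicElement d)
    (hinv : ∀ a : Q, (a ⇨ₗ d) ⇨ᵣ d = a) (a : Q) : (a ⇨ᵣ d) ⇨ₗ d = a := by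
  rw [hd.rightMulResiduation_eq, ← hd.rightMulResiduation_eq, hinv]

variable [IsQuantale Q]

theorem IsRightSided.mul_left {r : Q} (hr : IsRightSided r) (x : Q) : IsRightSided (x * r) := by
  rw [IsRightSided, mul_assoc]
  exact mul_le_mul_right hr x

theorem IsLeftSided.mul_right {l : Q} (hl : IsLeftSided l) (y : Q) : IsLeftSided (l * y) := by
  rw [IsLeftSided, ← mul_assoc]
  exact mul_le_mul_left hl y

theorem isLeftSided_leftMulResiduation_bot (a : Q) : IsLeftSided (a ⇨ₗ ⊥) := by
  rw [IsLeftSided, leftMulResiduation_le_iff_mul_le, mul_assoc,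
    le_bot_iff.mp (leftMulResiduation_le_iff_mul_le.mp le_rfl), mul_bot]

theorem isRightSided_rightMulResiduation_bot (a : Q) : IsRightSided (a ⇨ᵣ ⊥) := by
  rw [IsRightSided, rightMulResiduation_le_iff_mul_le, ← mul_assoc,
    le_bot_iff.mp (rightMulResiduation_le_iff_mul_le.mp le_rfl), bot_mul]

theorem bot_leftMulResiduation (a : Q) : ⊥ ⇨ₗ a = ⊤ :=
  top_le_iff.mp (leftMulResiduation_le_iff_mul_le.mpr (by simp))

theorem IsRightSided.eq_bot_of_le {s : Q} (htop : ⊤ ⇨ₗ d = ⊥) (hs : IsRightSided s)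
    (hsd : s ≤ d) : s = ⊥ :=
  le_bot_iff.mp (htop ▸ leftMulResiduation_le_iff_mul_le.mpr (le_trans hs hsd))

theorem IsLeftSided.eq_bot_of_le {s : Q} (htop : ⊤ ⇨ᵣ d = ⊥) (hs : IsLeftSided s)
    (hsd : s ≤ d) : s = ⊥ :=
  le_bot_iff.mp (htop ▸ rightMulResiduation_le_iff_mul_le.mpr (le_trans hs hsd))

theorem IsRightSided.leftMulResiduation_eq_leftMulResiduation_bot {r : Q} (htop : ⊤ ⇨ₗ d = ⊥)
    (hr : IsRightSided r) : r ⇨ₗ d = r ⇨ₗ ⊥ := by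
  simp only [leftMulResiduation]
  congr 1
  ext x
  exact ⟨fun h => ((hr.mul_left x).eq_bot_of_le htop h).le, fun h => h.trans bot_le⟩

theorem IsLeftSided.rightMulResiduation_eq_rightMulResiduation_bot {l : Q} (htop : ⊤ ⇨ᵣ d = ⊥)
    (hl : IsLeftSided l) : l ⇨ᵣ d = l ⇨ᵣ ⊥ := by
  simp only [rightMulResiduation]
  congr 1
  ext y
  exact ⟨fun h => ((hl.mul_right y).eq_bot_of_le htop h).le, fun h => h.trans bot_le⟩

theorem IsCyclicElement.top_leftMulResiduation (hd : IsCyclicElement d)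
    (hinv : ∀ a : Q, (a ⇨ₗ d) ⇨ᵣ d = a) : ⊤ ⇨ₗ d = ⊥ := by
  rw [← bot_leftMulResiduation d, ← hd.rightMulResiduation_eq, hinv]

theorem IsCyclicElement.top_rightMulResiduation (hd : IsCyclicElement d)
    (hinv : ∀ a : Q, (a ⇨ₗ d) ⇨ᵣ d = a) : ⊤ ⇨ᵣ d = ⊥ := by
  rw [hd.rightMulResiduation_eq, hd.top_leftMulResiduation hinv]

theorem IsRightSided.leftMulResiduation_bot_rightMulResiduation_bot (hd : IsCyclicElement d)
    (hinv : ∀ a : Q, (a ⇨ₗ d) ⇨ᵣ d = a) {r : Q} (hr : IsRightSided r) :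
    (r ⇨ₗ ⊥) ⇨ᵣ ⊥ = r := by
  have hrd := hr.leftMulResiduation_eq_leftMulResiduation_bot (hd.top_leftMulResiduation hinv)
  have hleft : IsLeftSided (r ⇨ₗ d) := hrd ▸ isLeftSided_leftMulResiduation_bot r
  rw [← hrd,
    ← hleft.rightMulResiduation_eq_rightMulResiduation_bot (hd.top_rightMulResiduation hinv), hinv]

theorem IsLeftSided.rightMulResiduation_bot_leftMulResiduation_bot (hd : IsCyclicElement d)
    (hinv : ∀ a : Q, (a ⇨ₗ d) ⇨ᵣ d = a) {l : Q} (hl : IsLeftSided l) :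
    (l ⇨ᵣ ⊥) ⇨ₗ ⊥ = l := by
  have hld := hl.rightMulResiduation_eq_rightMulResiduation_bot (hd.top_rightMulResiduation hinv)
  have hright : IsRightSided (l ⇨ᵣ d) := hld ▸ isRightSided_rightMulResiduation_bot l
  rw [← hld,
    ← hright.leftMulResiduation_eq_leftMulResiduation_bot (hd.top_leftMulResiduation hinv),
    hd.leftMulResiduation_rightMulResiduation hinv]

end

theorem stmt10_general {Q : Type*} [GQuantale Q] (d : Q)
    (hcyc : ∀ a b : Q, a * b ≤ d ↔ b * a ≤ d)
    (hdual₂ : ∀ a : Q, sSup {y : Q | sSup {x : Q | x * a ≤ d} * y ≤ d} = a) :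
    -- Q is von Neumann: the annulator maps are mutually inverse between
    -- right-sided and left-sided elements
    ((∀ r : Q, r * ⊤ ≤ r → ⊤ * sSup {x : Q | x * r ≤ ⊥} ≤ sSup {x : Q | x * r ≤ ⊥}) ∧
     (∀ l : Q, ⊤ * l ≤ l → sSup {y : Q | l * y ≤ ⊥} * ⊤ ≤ sSup {y : Q | l * y ≤ ⊥}) ∧
     (∀ r : Q, r * ⊤ ≤ r → sSup {y : Q | sSup {x : Q | x * r ≤ ⊥} * y ≤ ⊥} = r) ∧
     (∀ l : Q, ⊤ * l ≤ l → sSup {x : Q | x * sSup {y : Q | l * y ≤ ⊥} ≤ ⊥} = l)) ∧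
    -- the Girard duality extends the von Neumann duality
    ((∀ r : Q, r * ⊤ ≤ r → sSup {x : Q | x * r ≤ d} = sSup {x : Q | x * r ≤ ⊥}) ∧
     (∀ l : Q, ⊤ * l ≤ l → sSup {y : Q | l * y ≤ d} = sSup {y : Q | l * y ≤ ⊥})) :=
  ⟨⟨fun r _ => isLeftSided_leftMulResiduation_bot r,
    fun l _ => isRightSided_rightMulResiduation_bot l,
    fun _ hr => IsRightSided.leftMulResiduation_bot_rightMulResiduation_bot hcyc hdual₂ hr,
    fun _ hl => IsLeftSided.rightMulResiduation_bot_leftMulResiduation_bot hcyc hdual₂ hl⟩,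
   fun _ hr => IsRightSided.leftMulResiduation_eq_leftMulResiduation_bot
      (IsCyclicElement.top_leftMulResiduation hcyc hdual₂) hr,
   fun _ hl => IsLeftSided.rightMulResiduation_eq_rightMulResiduation_bot
      (IsCyclicElement.top_rightMulResiduation hcyc hdual₂) hl⟩

/-- Every Girard quantale is von Neumann, and the Girard duality restricted to
right- and left-sided elements is the von Neumann duality by annulators. -/
theorem stmt10 {Q : Type*} [GQuantale Q] (d : Q)
    (hcyc : ∀ a b : Q, a * b ≤ d ↔ b * a ≤ d)
    (hdual₁ : ∀ a : Q, sSup {x : Q | x * sSup {y : Q | a * y ≤ d} ≤ d} = a)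
    (hdual₂ : ∀ a : Q, sSup {y : Q | sSup {x : Q | x * a ≤ d} * y ≤ d} = a) :
    -- Q is von Neumann: the annulator maps are mutually inverse between
    -- right-sided and left-sided elements
    ((∀ r : Q, r * ⊤ ≤ r → ⊤ * sSup {x : Q | x * r ≤ ⊥} ≤ sSup {x : Q | x * r ≤ ⊥}) ∧
     (∀ l : Q, ⊤ * l ≤ l → sSup {y : Q | l * y ≤ ⊥} * ⊤ ≤ sSup {y : Q | l * y ≤ ⊥}) ∧
     (∀ r : Q, r * ⊤ ≤ r → sSup {y : Q | sSup {x : Q | x * r ≤ ⊥} * y ≤ ⊥} = r) ∧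
     (∀ l : Q, ⊤ * l ≤ l → sSup {x : Q | x * sSup {y : Q | l * y ≤ ⊥} ≤ ⊥} = l)) ∧
    -- the Girard duality extends the von Neumann duality
    ((∀ r : Q, r * ⊤ ≤ r → sSup {x : Q | x * r ≤ d} = sSup {x : Q | x * r ≤ ⊥}) ∧
     (∀ l : Q, ⊤ * l ≤ l → sSup {y : Q | l * y ≤ d} = sSup {y : Q | l * y ≤ ⊥})) :=
  stmt10_general d hcyc hdual₂
end

section
/- Let S be a complete lattice. The operation on S ⊗ S^op determined on generators by (x ⊗ y')·(u ⊗ v') = 0 if u ≤ y, and = x ⊗ v' otherwise, extends to a well-defined associative multiplication distributing over arbitrary joins, making S ⊗ S^op a quantale C(S). -/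
/-- A bimorphism of complete lattices: a map preserving arbitrary joins in each
variable separately. -/
def IsBimorphism {S T U : Type*} [CompleteLattice S] [CompleteLattice T]
    [CompleteLattice U] (f : S → T → U) : Prop :=
  (∀ (A : Set S) (y : T), f (sSup A) y = ⨆ x ∈ A, f x y) ∧
  (∀ (x : S) (B : Set T), f x (sSup B) = ⨆ y ∈ B, f x y)

/-- `(P, gen)` is a presentation of the tensor product `S ⊗ T` of sup-lattices:
`gen` is the universal bimorphism. -/
structure IsTensor (S T P : Type u) [CompleteLattice S] [CompleteLattice T]
    [CompleteLattice P] (gen : S → T → P) : Prop where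
  bimorph : IsBimorphism gen
  universal : ∀ (U : Type u) [CompleteLattice U] (f : S → T → U), IsBimorphism f →
      ∃! g : sSupHom P U, ∀ x y, g (gen x y) = f x y

section Classical

open Classical

theorem ite_sSup_le_eq_iSup {α U : Type*} [CompleteLattice α] [CompleteLattice U]
    (A : Set α) (y : α) (c : U) :
    (if sSup A ≤ y then ⊥ else c) = ⨆ u ∈ A, if u ≤ y then ⊥ else c := by
  by_cases h : sSup A ≤ y
  · rw [if_pos h]
    exact (iSup₂_eq_bot.2 fun u hu => if_pos ((le_sSup hu).trans h)).symm
  · obtain ⟨u, hu, hnu⟩ : ∃ u ∈ A, ¬u ≤ y := by simpa [sSup_le_iff] using h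
    refine le_antisymm ?_ (iSup₂_le fun w _ => by split_ifs <;> simp)
    rw [if_neg h]
    exact le_iSup₂_of_le u hu (by rw [if_neg hnu])

theorem isBimorphism_ite_le {S T U : Type*} [CompleteLattice S] [CompleteLattice T]
    [CompleteLattice U] {f : T → U} (hf : ∀ B, f (sSup B) = ⨆ v ∈ B, f v) (y : S) :
    IsBimorphism fun u v => if u ≤ y then ⊥ else f v :=
  ⟨fun A v => ite_sSup_le_eq_iSup A y (f v), fun u B => by dsimp only; split_ifs <;> simp [hf]⟩

end Classical

namespace IsTensor

section

variable {S T P : Type u} [CompleteLattice S] [CompleteLattice T] [CompleteLattice P]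
  {gen : S → T → P}

noncomputable def lift (ht : IsTensor S T P gen) {U : Type u} [CompleteLattice U]
    {f : S → T → U} (hf : IsBimorphism f) : sSupHom P U :=
  (ht.universal U f hf).exists.choose

@[simp]
theorem lift_gen (ht : IsTensor S T P gen) {U : Type u} [CompleteLattice U]
    {f : S → T → U} (hf : IsBimorphism f) (x : S) (y : T) : ht.lift hf (gen x y) = f x y :=
  (ht.universal U f hf).exists.choose_spec x y

theorem induction_on (ht : IsTensor S T P gen) {C : P → Prop} (gen_mem : ∀ x y, C (gen x y))
    (sSup_mem : ∀ s, (∀ p ∈ s, C p) → C (sSup s)) (p : P) : C p := by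
  -- `{p // C p}` is a sup-lattice receiving `gen`; the induced map back into `P` fixes the
  -- generators, hence is the identity.
  let _ : SupSet {p // C p} :=
    ⟨fun s => ⟨sSup (Subtype.val '' s), sSup_mem _ (by rintro _ ⟨q, -, rfl⟩; exact q.2)⟩⟩
  let _ : CompleteLattice {p // C p} := completeLatticeOfSup _ fun s =>
    ⟨fun q hq => show q.1 ≤ sSup (Subtype.val '' s) from le_sSup ⟨q, hq, rfl⟩,
      fun q hq => show sSup (Subtype.val '' s) ≤ q.1 from
        sSup_le (by rintro _ ⟨r, hr, rfl⟩; exact Subtype.coe_le_coe.2 (hq hr))⟩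
  let val : sSupHom {p // C p} P := ⟨Subtype.val, fun _ => rfl⟩
  have hgen : IsBimorphism fun x y => (⟨gen x y, gen_mem x y⟩ : {p // C p}) :=
    ⟨fun A y => Subtype.val_injective <| (ht.bimorph.1 A y).trans
        (map_iSup₂ val fun x (_ : x ∈ A) => ⟨gen x y, gen_mem x y⟩).symm,
      fun x B => Subtype.val_injective <| (ht.bimorph.2 x B).trans
        (map_iSup₂ val fun y (_ : y ∈ B) => ⟨gen x y, gen_mem x y⟩).symm⟩
  obtain ⟨g, hg, -⟩ := ht.universal _ _ hgen
  have hval : val.comp g = sSupHom.id P :=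
    (ht.universal P gen ht.bimorph).unique (fun x y => congrArg Subtype.val (hg x y))
      fun _ _ => rfl
  have hgp : (g p).1 = p := DFunLike.congr_fun hval p
  exact hgp ▸ (g p).2

theorem hom_ext (ht : IsTensor S T P gen) {U : Type*} [CompleteLattice U] {g₁ g₂ : sSupHom P U}
    (h : ∀ x y, g₁ (gen x y) = g₂ (gen x y)) : g₁ = g₂ :=
  sSupHom.ext <| ht.induction_on h fun s hs => by
    simp only [map_sSup, sSup_image]; exact biSup_congr hs

theorem apply_eq_iSup_of_gen (ht : IsTensor S T P gen) {U ι : Type*} [CompleteLattice U]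
    {g : sSupHom P U} (I : Set ι) (f : ι → sSupHom P U)
    (h : ∀ x y, g (gen x y) = ⨆ i ∈ I, f i (gen x y)) (p : P) : g p = ⨆ i ∈ I, f i p := by
  induction p using ht.induction_on with
  | gen_mem x y => exact h x y
  | sSup_mem s hs =>
    simp only [map_sSup, sSup_image, biSup_congr hs]
    exact iSup₂_comm _

end

section

open Classical

variable {S P : Type u} [CompleteLattice S] [CompleteLattice P] {gen : S → Sᵒᵈ → P}

noncomputable def mulLeftGen (ht : IsTensor S Sᵒᵈ P gen) (x : S) (y : Sᵒᵈ) : sSupHom P P :=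
  ht.lift (isBimorphism_ite_le (ht.bimorph.2 x) (OrderDual.ofDual y))

theorem mulLeftGen_gen (ht : IsTensor S Sᵒᵈ P gen) (x : S) (y : Sᵒᵈ) (u : S) (v : Sᵒᵈ) :
    ht.mulLeftGen x y (gen u v) = if u ≤ OrderDual.ofDual y then ⊥ else gen x v :=
  ht.lift_gen _ u v

theorem mulLeftGen_comp_mulLeftGen (ht : IsTensor S Sᵒᵈ P gen) (x u : S) (y v : Sᵒᵈ) :
    (ht.mulLeftGen x y).comp (ht.mulLeftGen u v) =
      if u ≤ OrderDual.ofDual y then ⊥ else ht.mulLeftGen x v := by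
  refine ht.hom_ext fun p q => ?_
  simp only [sSupHom.comp_apply, mulLeftGen_gen]
  split_ifs <;> simp [mulLeftGen_gen, *]

theorem isBimorphism_mulLeftGen_apply (ht : IsTensor S Sᵒᵈ P gen) (b : P) :
    IsBimorphism fun x y => ht.mulLeftGen x y b := by
  refine ⟨fun A y => ht.apply_eq_iSup_of_gen A (ht.mulLeftGen · y) (fun u v => ?_) b,
    fun x B => ht.apply_eq_iSup_of_gen B (ht.mulLeftGen x) (fun u v => ?_) b⟩
  · simp only [mulLeftGen_gen]
    split_ifs <;> simp [ht.bimorph.1]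
  · -- `u ≤ y` is `y ≤ u` in `Sᵒᵈ`, where the joins of `B` are taken.
    simp only [mulLeftGen_gen, ← OrderDual.le_toDual]
    exact ite_sSup_le_eq_iSup B (OrderDual.toDual u) (gen x v)

noncomputable def mulRight (ht : IsTensor S Sᵒᵈ P gen) (b : P) : sSupHom P P :=
  ht.lift (ht.isBimorphism_mulLeftGen_apply b)

theorem mulRight_gen (ht : IsTensor S Sᵒᵈ P gen) (b : P) (x : S) (y : Sᵒᵈ) :
    ht.mulRight b (gen x y) = ht.mulLeftGen x y b :=
  ht.lift_gen _ x y

theorem mulRight_sSup (ht : IsTensor S Sᵒᵈ P gen) (s : Set P) (a : P) :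
    ht.mulRight (sSup s) a = ⨆ b ∈ s, ht.mulRight b a :=
  ht.apply_eq_iSup_of_gen s ht.mulRight (fun x y => by
    simp only [mulRight_gen, map_sSup, sSup_image]) a

theorem mulRight_mulLeftGen (ht : IsTensor S Sᵒᵈ P gen) (c : P) (x : S) (y : Sᵒᵈ) (b : P) :
    ht.mulRight c (ht.mulLeftGen x y b) = ht.mulLeftGen x y (ht.mulRight c b) := by
  suffices (ht.mulRight c).comp (ht.mulLeftGen x y) = (ht.mulLeftGen x y).comp (ht.mulRight c) from
    DFunLike.congr_fun this b
  refine ht.hom_ext fun u v => ?_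
  simp only [sSupHom.comp_apply, mulLeftGen_gen, mulRight_gen]
  rw [← sSupHom.comp_apply (ht.mulLeftGen x y), mulLeftGen_comp_mulLeftGen]
  split_ifs <;> simp [mulRight_gen]

theorem mulRight_mulRight (ht : IsTensor S Sᵒᵈ P gen) (a b c : P) :
    ht.mulRight c (ht.mulRight b a) = ht.mulRight (ht.mulRight c b) a := by
  suffices (ht.mulRight c).comp (ht.mulRight b) = ht.mulRight (ht.mulRight c b) from
    DFunLike.congr_fun this a
  refine ht.hom_ext fun x y => ?_
  rw [sSupHom.comp_apply, mulRight_gen, mulRight_gen, mulRight_mulLeftGen]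

end

end IsTensor

open Classical in
/-- The generator formula `(x ⊗ y')·(u ⊗ v') = 0` if `u ≤ y`, else `x ⊗ v'`,
extends to a well-defined associative join-distributing multiplication on
`S ⊗ S^op`, making it a quantale `C(S)`. -/
theorem stmt11 {S P : Type u} [CompleteLattice S] [CompleteLattice P]
    (gen : S → Sᵒᵈ → P) (ht : IsTensor S Sᵒᵈ P gen) :
    ∃ m : P → P → P,
      (∀ a b c : P, m (m a b) c = m a (m b c)) ∧
      (∀ (a : P) (s : Set P), m a (sSup s) = ⨆ b ∈ s, m a b) ∧
      (∀ (s : Set P) (a : P), m (sSup s) a = ⨆ b ∈ s, m b a) ∧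
      (∀ x y u v : S,
        m (gen x (OrderDual.toDual y)) (gen u (OrderDual.toDual v)) =
          if u ≤ y then ⊥ else gen x (OrderDual.toDual v)) := by
  refine ⟨fun a b => ht.mulRight b a, fun a b c => ht.mulRight_mulRight a b c,
    fun a s => ht.mulRight_sSup s a, fun s a => ?_, fun x y u v => ?_⟩
  · exact (map_sSup _ s).trans sSup_image
  · exact (ht.mulRight_gen _ x _).trans (ht.mulLeftGen_gen x _ u _)
end

section
/- Let S be a complete lattice and Q(S) the quantale of join-preserving endomorphisms of S under composition and pointwise joins. For x ∈ S define ρ_x(y) = x if y ≠ 0, ρ_x(0) = 0, and λ_x(y) = 1 if y ≰ x, λ_x(y) = 0 if y ≤ x. Then the right-sided elements of Q(S) are exactly the maps ρ_x and the left-sided elements are exactly the maps λ_x; moreover ρ_x^⊥ = λ_x and λ_x^⊥ = ρ_x, where α^⊥ = ⋁{β : α∘β = 0} for right-sided α and ⋁{β : β∘α = 0} for left-sided α; hence Q(S) is a von Neumann quantale. -/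
section QS
variable {S : Type*} [CompleteLattice S]

/-- Pointwise suprema of join-preserving endomaps. -/
noncomputable instance sSupHom.instSupSetEnd : SupSet (sSupHom S S) :=
  ⟨fun s => ⟨fun x => ⨆ f ∈ s, f x, by
    intro A
    rw [sSup_image]
    simp only [map_sSup, sSup_image]
    exact iSup₂_comm _⟩⟩

theorem sSupHom.sSup_apply' (s : Set (sSupHom S S)) (x : S) :
    sSup s x = ⨆ f ∈ s, f x := rfl

/-- `Q(S)`: the complete lattice of join-preserving endomaps of `S`. -/
noncomputable instance sSupHom.instCompleteLatticeEnd : CompleteLattice (sSupHom S S) :=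
  completeLatticeOfSup _ fun s => by
    constructor
    · intro f hf x
      exact le_biSup (fun g : sSupHom S S => g x) hf
    · intro g hg x
      exact iSup₂_le fun f hf => hg hf x

/-- The endomorphism quantale `Q(S)`, with composition as multiplication. -/
noncomputable instance sSupHom.instQuantaleEnd : Quantale' (sSupHom S S) where
  __ := sSupHom.instCompleteLatticeEnd
  mul := fun f g => f.comp g
  mul_assoc := fun _ _ _ => rfl
  mul_sSup := by
    intro a s
    apply DFunLike.ext
    intro x
    rw [← sSup_image, sSupHom.sSup_apply', iSup_image]
    show a ((sSup s) x) = _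
    rw [sSupHom.sSup_apply' s x, map_iSup₂]
    rfl
  sSup_mul := by
    intro s a
    apply DFunLike.ext
    intro x
    rw [← sSup_image, sSupHom.sSup_apply', iSup_image]
    show (sSup s) (a x) = _
    rw [sSupHom.sSup_apply' s (a x)]
    rfl

open Classical in
/-- The right-sided element `ρ_x` of `Q(S)`. -/
noncomputable def rho (x : S) : sSupHom S S :=
  ⟨fun y => if y = ⊥ then ⊥ else x, by
    intro A
    rw [sSup_image]
    show (if sSup A = ⊥ then ⊥ else x) = _
    rcases eq_or_ne (sSup A) ⊥ with h | h
    · rw [h, if_pos rfl]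

      refine (le_bot_iff.mp (iSup₂_le fun y hy => ?_)).symm
      have hy' : y = ⊥ := le_bot_iff.mp ((le_sSup hy).trans_eq h)
      simp [hy']
    · rw [if_neg h]
      refine le_antisymm ?_ (iSup₂_le fun y hy => ?_)
      · obtain ⟨a, ha, hab⟩ : ∃ a ∈ A, a ≠ ⊥ := by
          by_contra hc
          push_neg at hc
          exact h (sSup_eq_bot.mpr hc)
        have hx : x = if a = ⊥ then ⊥ else x := by simp [hab]
        exact hx.le.trans (le_biSup (fun y => if y = ⊥ then ⊥ else x) ha)
      · split
        · exact bot_le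
        · exact le_rfl⟩

open Classical in
/-- The left-sided element `λ_x` of `Q(S)`. -/
noncomputable def lam (x : S) : sSupHom S S :=
  ⟨fun y => if y ≤ x then ⊥ else ⊤, by
    intro A
    rw [sSup_image]
    show (if sSup A ≤ x then ⊥ else ⊤) = _
    by_cases h : sSup A ≤ x
    · rw [if_pos h]
      refine (le_bot_iff.mp (iSup₂_le fun y hy => ?_)).symm
      rw [if_pos ((le_sSup hy).trans h)]
    · rw [if_neg h]
      obtain ⟨a, ha, hax⟩ : ∃ a ∈ A, ¬ a ≤ x := by
        by_contra hc
        push_neg at hc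
        exact h (sSup_le hc)
      refine le_antisymm ?_ le_top
      have ht : (⊤ : S) = if a ≤ x then ⊥ else ⊤ := by simp [hax]
      exact ht.le.trans (le_biSup (fun y => if y ≤ x then ⊥ else ⊤) ha)⟩

/-- The right adjoint of a join-preserving map. -/
noncomputable def adj (α : sSupHom S S) (x : S) : S := sSup {y | α y ≤ x}

end QS

/-!
A right-sided `α` satisfies `α ⊤ ≤ α y` for every `y ≠ ⊥`, which forces `α = ρ_{α ⊤}`. A left-sided
`α` takes only the values `⊥` and `⊤`, so it is `λ_x` for the largest `x` that it kills, namely the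
right adjoint of `α` at `⊥`. Since `ρ_x x = x`, we get `β ∘ ρ_x = 0 ↔ β x = ⊥ ↔ β ≤ λ_x` and
`λ_x ∘ β = 0 ↔ (∀ y, β y ≤ x) ↔ β ≤ ρ_x`: both annihilators are principal down-sets, with tops
`λ_x` and `ρ_x`.
-/

section EndomorphismQuantale

variable {S : Type*} [CompleteLattice S]

theorem sSupHom.mul_apply' (α β : sSupHom S S) (y : S) : (α * β) y = α (β y) := rfl

theorem gc_adj (α : sSupHom S S) : GaloisConnection α (adj α) := fun _ _ =>
  ⟨fun h => le_sSup h, fun h => (OrderHomClass.mono α h).trans <| by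
    rw [adj, map_sSup]
    exact sSup_le (Set.forall_mem_image.mpr fun _ hz => hz)⟩

theorem rho_apply_bot (x : S) : rho x ⊥ = ⊥ := if_pos rfl

theorem rho_apply_of_ne_bot (x : S) {y : S} (hy : y ≠ ⊥) : rho x y = x := if_neg hy

theorem rho_apply_le (x y : S) : rho x y ≤ x := by
  rcases eq_or_ne y ⊥ with rfl | hy
  · exact (rho_apply_bot x).trans_le bot_le
  · exact (rho_apply_of_ne_bot x hy).le

theorem rho_apply_self (x : S) : rho x x = x := by
  rcases eq_or_ne x ⊥ with rfl | hx
  · exact rho_apply_bot ⊥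
  · exact rho_apply_of_ne_bot x hx

theorem le_rho_iff {α : sSupHom S S} {x : S} : α ≤ rho x ↔ ∀ y, α y ≤ x := by
  refine ⟨fun h y => (h y).trans (rho_apply_le x y), fun h y => ?_⟩
  rcases eq_or_ne y ⊥ with rfl | hy
  · exact (map_bot α).trans_le bot_le
  · exact (h y).trans_eq (rho_apply_of_ne_bot x hy).symm

theorem sSupHom.top_apply_of_ne_bot {y : S} (hy : y ≠ ⊥) : (⊤ : sSupHom S S) y = ⊤ :=
  top_le_iff.mp <| (rho_apply_of_ne_bot ⊤ hy).ge.trans ((le_top : rho (⊤ : S) ≤ ⊤) y)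

theorem lam_apply_of_le {x y : S} (h : y ≤ x) : lam x y = ⊥ := if_pos h

theorem lam_apply_of_not_le {x y : S} (h : ¬y ≤ x) : lam x y = ⊤ := if_neg h

theorem le_lam_iff {α : sSupHom S S} {x : S} : α ≤ lam x ↔ α x = ⊥ := by
  refine ⟨fun h => le_bot_iff.mp ((h x).trans_eq (lam_apply_of_le le_rfl)), fun h y => ?_⟩
  by_cases hy : y ≤ x
  · exact (OrderHomClass.mono α hy).trans (h.trans (lam_apply_of_le hy).symm).le
  · exact le_top.trans_eq (lam_apply_of_not_le hy).symm

theorem mul_top_le_iff {α : sSupHom S S} : α * ⊤ ≤ α ↔ ∃ x, α = rho x := by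
  constructor
  · intro h
    refine ⟨α ⊤, le_antisymm (le_rho_iff.mpr fun y => OrderHomClass.mono α le_top) fun y => ?_⟩
    rcases eq_or_ne y ⊥ with rfl | hy
    · exact (rho_apply_bot _).trans_le bot_le
    · calc rho (α ⊤) y = (α * ⊤) y := by
            rw [rho_apply_of_ne_bot _ hy, sSupHom.mul_apply', sSupHom.top_apply_of_ne_bot hy]
        _ ≤ α y := h y
  · rintro ⟨x, rfl⟩
    exact le_rho_iff.mpr fun y => rho_apply_le x _

theorem top_mul_le_iff {α : sSupHom S S} : ⊤ * α ≤ α ↔ ∃ x, α = lam x := by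
  constructor
  · intro h
    refine ⟨adj α ⊥, le_antisymm (le_lam_iff.mpr (le_bot_iff.mp ((gc_adj α).l_u_le ⊥))) fun y => ?_⟩
    by_cases hy : y ≤ adj α ⊥
    · exact (lam_apply_of_le hy).trans_le bot_le
    · have hαy : α y ≠ ⊥ := fun h₀ => hy ((gc_adj α).le_u h₀.le)
      calc lam (adj α ⊥) y = (⊤ * α) y := by
            rw [lam_apply_of_not_le hy, sSupHom.mul_apply', sSupHom.top_apply_of_ne_bot hαy]
        _ ≤ α y := h y
  · rintro ⟨x, rfl⟩
    exact le_lam_iff.mpr (by rw [sSupHom.mul_apply', lam_apply_of_le le_rfl, map_bot])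

theorem mul_rho_eq_bot_iff {β : sSupHom S S} {x : S} : β * rho x = ⊥ ↔ β x = ⊥ := by
  refine ⟨fun h => ?_, fun h => sSupHom.ext fun y => ?_⟩
  · rw [← rho_apply_self x]
    exact congr($h x)
  · exact le_bot_iff.mp ((OrderHomClass.mono β (rho_apply_le x y)).trans h.le)

theorem lam_mul_eq_bot_iff {β : sSupHom S S} {x : S} : lam x * β = ⊥ ↔ ∀ y, β y ≤ x := by
  refine ⟨fun h y => ?_, fun h => sSupHom.ext fun y => lam_apply_of_le (h y)⟩
  by_contra hy
  have htop : (⊤ : S) = ⊥ := (lam_apply_of_not_le hy).symm.trans congr($h y)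
  exact hy (le_top.trans (htop.trans_le bot_le))

theorem sSup_setOf_mul_rho_eq_bot (x : S) :
    sSup {β : sSupHom S S | β * rho x = ⊥} = lam x := by
  simp_rw [mul_rho_eq_bot_iff, ← le_lam_iff]
  exact csSup_Iic

theorem sSup_setOf_lam_mul_eq_bot (x : S) :
    sSup {β : sSupHom S S | lam x * β = ⊥} = rho x := by
  simp_rw [lam_mul_eq_bot_iff, ← le_rho_iff]
  exact csSup_Iic

end EndomorphismQuantale

/-- The right-sided elements of `Q(S)` are exactly the `ρ_x`, the left-sided
elements are exactly the `λ_x`, the annulator duality exchanges them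
(`ρ_x^⊥ = λ_x`, `λ_x^⊥ = ρ_x`), and hence `Q(S)` is a von Neumann quantale. -/
theorem stmt12 {S : Type*} [CompleteLattice S] :
    (∀ α : sSupHom S S, α * ⊤ ≤ α ↔ ∃ x : S, α = rho x) ∧
    (∀ α : sSupHom S S, ⊤ * α ≤ α ↔ ∃ x : S, α = lam x) ∧
    (∀ x : S, sSup {β : sSupHom S S | β * rho x = ⊥} = lam x) ∧
    (∀ x : S, sSup {β : sSupHom S S | lam x * β = ⊥} = rho x) ∧
    (∀ α : sSupHom S S, α * ⊤ ≤ α →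
      sSup {γ : sSupHom S S | sSup {β : sSupHom S S | β * α = ⊥} * γ = ⊥} = α) ∧
    (∀ α : sSupHom S S, ⊤ * α ≤ α →
      sSup {β : sSupHom S S | β * sSup {γ : sSupHom S S | α * γ = ⊥} = ⊥} = α) := by
  refine ⟨fun _ => mul_top_le_iff, fun _ => top_mul_le_iff, sSup_setOf_mul_rho_eq_bot,
    sSup_setOf_lam_mul_eq_bot, fun α hα => ?_, fun α hα => ?_⟩
  · obtain ⟨x, rfl⟩ := mul_top_le_iff.mp hα
    rw [sSup_setOf_mul_rho_eq_bot, sSup_setOf_lam_mul_eq_bot]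
  · obtain ⟨x, rfl⟩ := top_mul_le_iff.mp hα
    rw [sSup_setOf_lam_mul_eq_bot, sSup_setOf_mul_rho_eq_bot]
end

section
/- Let S be a completely distributive complete lattice. Then the endomorphism quantale Q(S) is a Girard quantale, with cyclic dualizing element δ given as the image of d = ⋁_x (x ⊗ x') under the mix map φ; conversely, if Q(S) is Girard then S is completely distributive. -/
/-- `d` is a cyclic dualizing element of the quantale `Q`. -/
def IsCyclicDualizing {Q : Type*} [Quantale' Q] (d : Q) : Prop :=
  (∀ a b : Q, a * b ≤ d ↔ b * a ≤ d) ∧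
  (∀ a : Q, sSup {x : Q | x * sSup {y : Q | a * y ≤ d} ≤ d} = a) ∧
  (∀ a : Q, sSup {y : Q | sSup {x : Q | x * a ≤ d} * y ≤ d} = a)

/-- The image of `d = ⋁_x (x ⊗ x')` under the mix map `φ : C(S) → Q(S)`,
namely `δ(y) = ⋁{s ∈ S : y ≰ s}`. -/
noncomputable def delta {S : Type*} [CompleteLattice S] : sSupHom S S :=
  ⟨fun y => sSup {s : S | ¬ y ≤ s}, by
    intro A
    rw [sSup_image]
    apply le_antisymm
    · refine sSup_le fun s hs => ?_
      rw [Set.mem_setOf_eq, sSup_le_iff] at hs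
      push_neg at hs
      obtain ⟨a, ha, has⟩ := hs
      calc s ≤ sSup {t : S | ¬ a ≤ t} := le_sSup has
        _ ≤ ⨆ y ∈ A, sSup {t : S | ¬ y ≤ t} :=
          le_biSup (fun y => sSup {t : S | ¬ y ≤ t}) ha
    · refine iSup₂_le fun y hy => sSup_le fun s hs => le_sSup ?_
      exact fun h => hs ((le_sSup hy).trans h)⟩

section AuxProof
universe u
open Classical

variable {S : Type u} [CompleteLattice S]

theorem le_ptw {f g : sSupHom S S} (h : ∀ x, f x ≤ g x) : f ≤ g := h
theorem ptw_le {f g : sSupHom S S} (h : f ≤ g) (x : S) : f x ≤ g x := h x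

/-- the totally-below relation -/
def TB (a b : S) : Prop := ∀ A : Set S, b ≤ sSup A → ∃ c ∈ A, a ≤ c

theorem TB.le {a b : S} (h : TB a b) : a ≤ b := by
  obtain ⟨c, hc, hac⟩ := h {b} (le_sSup (Set.mem_singleton b))
  exact hac.trans hc.le

theorem tb_of_not_le_delta {a b : S} (h : ¬ b ≤ delta a) : TB a b := by
  intro A hA
  by_contra hc
  push_neg at hc
  exact h (hA.trans (sSup_le fun c hcA => le_sSup (fun hle : a ≤ c => (hc c hcA hle))))

theorem not_le_delta_of_tb {a b : S} (h : TB a b) : ¬ b ≤ delta a := by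
  intro hb
  obtain ⟨c, hc, hac⟩ := h {s | ¬ a ≤ s} hb
  exact hc hac

theorem le_of_not_le_delta {a b : S} (h : ¬ b ≤ delta a) : a ≤ b :=
  (tb_of_not_le_delta h).le

theorem le_adj_iff {f : sSupHom S S} {x t : S} : x ≤ adj f t ↔ f x ≤ t := by
  constructor
  · intro h
    have h2 : f (adj f t) ≤ t := by
      rw [show adj f t = sSup {y | f y ≤ t} from rfl, map_sSup]
      exact sSup_le (by rintro _ ⟨y, hy, rfl⟩; exact hy)
    exact le_trans (OrderHomClass.mono f h) h2
  · intro h; exact le_sSup h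

/-- join-density of the totally below relation -/
def Dens (S : Type u) [CompleteLattice S] : Prop := ∀ b : S, b ≤ sSup {a | TB a b}

theorem eq_sSup_tb (hD : Dens S) (b : S) : b = sSup {a | TB a b} :=
  le_antisymm (hD b) (sSup_le fun _ ha => ha.le)

theorem dens_of_H
    (H : ∀ (J K : Type u) (α : J → K → S),
      ⨅ j, ⨆ k, α j k = ⨆ f : J → K, ⨅ j, α j (f j)) : Dens S := by
  intro b
  rcases eq_or_ne b ⊥ with rfl | hb
  · exact bot_le
  set J := {A : Set S // b ≤ sSup A} with hJ
  set α : J → S → S := fun j k => if k ∈ j.1 then k else ⊥ with hα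
  have h1 : b ≤ ⨅ j, ⨆ k, α j k := by
    refine le_iInf fun j => ?_
    refine j.2.trans (sSup_le fun c hc => ?_)
    have h2 : c = α j c := by simp [hα, hc]
    exact h2.le.trans (le_iSup (α j) c)
  rw [H J S α] at h1
  refine h1.trans (iSup_le fun f => le_sSup ?_)
  show TB _ b
  intro A hA
  have hj : (⨅ j, α j (f j)) ≤ α ⟨A, hA⟩ (f ⟨A, hA⟩) := iInf_le _ (⟨A, hA⟩ : J)
  by_cases hf : f ⟨A, hA⟩ ∈ A
  · exact ⟨f ⟨A, hA⟩, hf, hj.trans (by simp [hα, hf])⟩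
  · obtain ⟨c, hc⟩ : A.Nonempty := by
      rcases A.eq_empty_or_nonempty with rfl | h
      · rw [sSup_empty, le_bot_iff] at hA
        exact absurd hA hb
      · exact h
    refine ⟨c, hc, le_trans (hj.trans ?_) bot_le⟩
    simp [hα, hf]

theorem comp_le_delta_iff (hD : Dens S) {α β : sSupHom S S} :
    α * β ≤ delta ↔ ∀ y b : S, ¬ β y ≤ delta b → α b ≤ delta y := by
  constructor
  · intro h y b hyb
    have h1 : b ≤ β y := le_of_not_le_delta hyb
    exact le_trans (OrderHomClass.mono α h1) (ptw_le h y)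
  · intro h
    refine le_ptw fun y => ?_
    show α (β y) ≤ delta y
    calc α (β y) ≤ α (sSup {c | TB c (β y)}) := OrderHomClass.mono α (hD (β y))
      _ = sSup (α '' {c | TB c (β y)}) := map_sSup ..
      _ ≤ delta y := by
          refine sSup_le ?_
          rintro _ ⟨c, hc, rfl⟩
          exact h y c (not_le_delta_of_tb hc)

theorem cyc (hD : Dens S) {α β : sSupHom S S} : α * β ≤ delta ↔ β * α ≤ delta := by
  rw [comp_le_delta_iff hD, comp_le_delta_iff hD]
  constructor <;> · intro h y b h1
                    by_contra h2
                    exact h1 (h b y h2)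

/-- the linear negation in `Q(S)` with respect to `delta` -/
noncomputable def NN (α : sSupHom S S) : sSupHom S S := sSup {β | α * β ≤ delta}

theorem mul_NN_le (α : sSupHom S S) : α * NN α ≤ delta := by
  rw [NN, Quantale'.mul_sSup]
  exact iSup₂_le fun β hβ => hβ

theorem le_NN_iff {α β : sSupHom S S} : β ≤ NN α ↔ α * β ≤ delta := by
  constructor
  · intro h
    refine le_trans (le_ptw fun x => ?_) (mul_NN_le α)
    exact OrderHomClass.mono α (ptw_le h x)
  · intro h; exact le_sSup h

theorem adj_le_NN {α : sSupHom S S} {c y : S} (h : ¬ y ≤ delta c) :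
    adj α (delta c) ≤ NN α y := by
  have hβ' : α * ((rho (adj α (delta c))).comp (lam (delta c))) ≤ delta := by
    refine le_ptw fun z => ?_
    show α (rho (adj α (delta c)) (if z ≤ delta c then ⊥ else ⊤)) ≤ delta z
    by_cases hz : z ≤ delta c
    · rw [if_pos hz]
      show α (if (⊥:S) = ⊥ then ⊥ else _) ≤ _
      rw [if_pos rfl, map_bot]
      exact bot_le
    · rw [if_neg hz]
      have h1 : rho (adj α (delta c)) ⊤ ≤ adj α (delta c) := by
        show (if (⊤:S) = ⊥ then ⊥ else adj α (delta c)) ≤ _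
        split
        · exact bot_le
        · exact le_rfl
      have h2 : α (adj α (delta c)) ≤ delta c := le_adj_iff.mp le_rfl
      have h3 : (c:S) ≤ z := le_of_not_le_delta hz
      exact ((OrderHomClass.mono α h1).trans h2).trans (OrderHomClass.mono delta h3)
  have hle := ptw_le (le_sSup (show _ ∈ {β | α * β ≤ delta} from hβ')) y
  refine le_trans ?_ hle
  show adj α (delta c) ≤ rho _ (if y ≤ delta c then ⊥ else ⊤)
  rw [if_neg h]
  show adj α (delta c) ≤ (if (⊤:S) = ⊥ then ⊥ else adj α (delta c))
  split
  · next htop => exact le_top.trans (htop.le.trans bot_le)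
  · exact le_rfl

theorem NN_NN (hD : Dens S) (α : sSupHom S S) : NN (NN α) = α := by
  refine le_antisymm (sSup_le fun β hβ => le_ptw fun x => ?_) ?_
  · show β x ≤ α x
    calc β x ≤ β (sSup {b | TB b x}) := OrderHomClass.mono β (hD x)
      _ = sSup (β '' {b | TB b x}) := map_sSup ..
      _ ≤ α x := by
        refine sSup_le ?_
        rintro _ ⟨b, hb, rfl⟩
        refine (hD (β b)).trans (sSup_le fun c hc => ?_)
        have h1 : adj α (delta c) ≤ NN α (β b) := adj_le_NN (not_le_delta_of_tb hc)
        have h2 : NN α (β b) ≤ delta b := ptw_le hβ b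
        have h3 : ¬ x ≤ delta b := not_le_delta_of_tb hb
        have h4 : ¬ x ≤ adj α (delta c) := fun hx => h3 (hx.trans (h1.trans h2))
        have h5 : ¬ α x ≤ delta c := fun hx => h4 (le_adj_iff.mpr hx)
        exact (tb_of_not_le_delta h5).le
  · exact le_NN_iff.mpr ((cyc hD).mpr (mul_NN_le α))

theorem part1 (hD : Dens S) : IsCyclicDualizing (delta : sSupHom S S) := by
  refine ⟨fun a b => cyc hD, fun a => ?_, fun a => ?_⟩
  · have h : {x : sSupHom S S | x * NN a ≤ delta} = {x | NN a * x ≤ delta} :=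
      Set.ext fun x => cyc hD
    show sSup {x : sSupHom S S | x * NN a ≤ delta} = a
    rw [h]
    exact NN_NN hD a
  · have h : {x : sSupHom S S | x * a ≤ delta} = {x | a * x ≤ delta} :=
      Set.ext fun x => cyc hD
    show sSup {y | sSup {x : sSupHom S S | x * a ≤ delta} * y ≤ delta} = a
    rw [h]
    exact NN_NN hD a

end AuxProof
section AuxProof2
universe u
open Classical

variable {S : Type u} [CompleteLattice S]

theorem cd_of_dens (hD : Dens S) (J K : Type u) (α : J → K → S) :
    ⨅ j, ⨆ k, α j k = ⨆ f : J → K, ⨅ j, α j (f j) := by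
  refine le_antisymm ?_ (iSup_le fun f => le_iInf fun j => (iInf_le _ j).trans (le_iSup _ (f j)))
  refine (hD _).trans (sSup_le fun a ha => ?_)
  have h : ∀ j, ∃ k, a ≤ α j k := by
    intro j
    obtain ⟨c, hc, hac⟩ := ha (Set.range (α j)) ((iInf_le _ j).trans sSup_range.ge)
    obtain ⟨k, rfl⟩ := hc
    exact ⟨k, hac⟩
  choose f hf using h
  exact le_trans (le_iInf hf) (le_iSup (fun f => ⨅ j, α j (f j)) f)

variable (d : sSupHom S S)

/-- negation w.r.t. a candidate dualizing element `d` -/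
noncomputable def Pd (a : sSupHom S S) : sSupHom S S := sSup {y | a * y ≤ d}

variable {d}

theorem mul_Pd_le (a : sSupHom S S) : a * Pd d a ≤ d := by
  rw [Pd, Quantale'.mul_sSup]
  exact iSup₂_le fun β hβ => hβ

theorem Pd_antitone {a b : sSupHom S S} (h : a ≤ b) : Pd d b ≤ Pd d a :=
  sSup_le fun y hy => le_sSup
    (show a * y ≤ d from le_trans (le_ptw fun x => ptw_le h (y x)) hy)

section hd
variable (hcyc : ∀ a b : sSupHom S S, a * b ≤ d ↔ b * a ≤ d)
  (hd2 : ∀ a : sSupHom S S, sSup {x : sSupHom S S | x * sSup {y : sSupHom S S | a * y ≤ d} ≤ d} = a)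
  (hT : (⊤ : S) ≠ ⊥)

include hcyc hd2

theorem hset (a : sSupHom S S) : {y : sSupHom S S | a * y ≤ d} = {y | y * a ≤ d} :=
  Set.ext fun y => hcyc a y

theorem hPP (a : sSupHom S S) : Pd d (Pd d a) = a := by
  have h : Pd d (Pd d a) = sSup {y : sSupHom S S | y * Pd d a ≤ d} :=
    congrArg sSup (hset hcyc hd2 (Pd d a))
  rw [h]
  exact hd2 a

theorem Pd_id : Pd d (sSupHom.id S) = d := by
  have h : {y : sSupHom S S | (sSupHom.id S) * y ≤ d} = {y | y ≤ d} := by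
    ext y
    show (sSupHom.id S).comp y ≤ d ↔ y ≤ d
    rw [sSupHom.id_comp]
  rw [Pd, h]
  exact le_antisymm (sSup_le fun y hy => hy) (le_sSup (show d ≤ d from le_rfl))

theorem Pd_d : Pd d d = sSupHom.id S := by
  have h := hPP hcyc hd2 (sSupHom.id S)
  rwa [Pd_id hcyc hd2] at h

/-- `nn w = ⋀ { d z : z ≰ w }` -/
noncomputable def nnn (d : sSupHom S S) (w : S) : S := ⨅ z ∈ {z : S | ¬ z ≤ w}, d z

include hT

theorem P_lam (w : S) : Pd d (lam w) = rho (nnn d w) := by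
  have hchar : ∀ y : sSupHom S S, y * lam w ≤ d ↔ y ⊤ ≤ nnn d w := by
    intro y
    constructor
    · intro h
      refine le_iInf₂ fun z hz => ?_
      have h2 := ptw_le h z
      show _ ≤ d z
      rw [show (y * lam w) z = y (if z ≤ w then ⊥ else ⊤) from rfl, if_neg hz] at h2
      exact h2
    · intro h
      refine le_ptw fun z => ?_
      show y (if z ≤ w then ⊥ else ⊤) ≤ d z
      by_cases hz : z ≤ w
      · rw [if_pos hz, map_bot]; exact bot_le
      · rw [if_neg hz]
        exact h.trans (iInf₂_le z hz)
    
  rw [Pd, hset hcyc hd2]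
  refine le_antisymm (sSup_le fun y hy => le_ptw fun z => ?_) (le_sSup ?_)
  · show y z ≤ (if z = ⊥ then ⊥ else nnn d w)
    by_cases hz : z = ⊥
    · rw [if_pos hz, hz, map_bot]
    · rw [if_neg hz]
      exact (OrderHomClass.mono y le_top).trans ((hchar y).mp hy)
  · show rho (nnn d w) * lam w ≤ d
    rw [hchar]
    show (if (⊤:S) = ⊥ then ⊥ else nnn d w) ≤ nnn d w
    rw [if_neg hT]

theorem e_bot : ⨅ z ∈ {z : S | z ≠ ⊥}, d z = ⊥ := by
  have hnt : nnn d (⊤ : S) = ⊤ := by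
    refine le_antisymm le_top (le_iInf₂ fun z hz => absurd le_top hz)
  have h1 : lam (⊤ : S) = Pd d (rho (⊤ : S)) := by
    have h := hPP hcyc hd2 (lam (⊤ : S))
    rw [P_lam hcyc hd2 hT, hnt] at h
    exact h.symm
  have h2 : rho (⨅ z ∈ {z : S | z ≠ ⊥}, d z) ≤ lam (⊤ : S) := by
    rw [h1, Pd, hset hcyc hd2]
    refine le_sSup ?_
    show rho _ * rho (⊤:S) ≤ d
    refine le_ptw fun z => ?_
    show rho _ (if z = ⊥ then ⊥ else (⊤:S)) ≤ d z
    by_cases hz : z = ⊥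
    · rw [if_pos hz]
      show (if (⊥:S) = ⊥ then ⊥ else _) ≤ d z
      rw [if_pos rfl]; exact bot_le
    · rw [if_neg hz]
      show (if (⊤:S) = ⊥ then ⊥ else _) ≤ d z
      rw [if_neg hT]
      exact iInf₂_le z hz
  have h3 := ptw_le h2 (⊤ : S)
  rw [show lam (⊤:S) (⊤:S) = if (⊤:S) ≤ ⊤ then ⊥ else ⊤ from rfl, if_pos le_rfl] at h3
  rw [show rho (⨅ z ∈ {z : S | z ≠ ⊥}, d z) ⊤ = if (⊤:S) = ⊥ then ⊥ else _ from rfl,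
    if_neg hT] at h3
  exact le_bot_iff.mp h3

theorem nnn_char (w : S) (y : sSupHom S S) :
    y * rho (nnn d w) ≤ d ↔ y (nnn d w) ≤ ⊥ := by
  constructor
  · intro h
    have h2 : y (nnn d w) ≤ ⨅ z ∈ {z : S | z ≠ ⊥}, d z := by
      refine le_iInf₂ fun z hz => ?_
      have h3 := ptw_le h z
      rw [show (y * rho (nnn d w)) z = y (if z = ⊥ then ⊥ else nnn d w) from rfl,
        if_neg hz] at h3
      exact h3
    rwa [e_bot hcyc hd2 hT] at h2
  · intro h
    refine le_ptw fun z => ?_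
    show y (if z = ⊥ then ⊥ else nnn d w) ≤ d z
    by_cases hz : z = ⊥
    · rw [if_pos hz, map_bot]; exact bot_le
    · rw [if_neg hz]
      exact h.trans bot_le

theorem nnn_eq (w : S) : nnn d w = w := by
  have hw : lam w = sSup {y : sSupHom S S | y * rho (nnn d w) ≤ d} := by
    have h := hPP hcyc hd2 (lam w)
    rw [P_lam hcyc hd2 hT] at h
    rw [← h]
    exact congrArg sSup (hset hcyc hd2 (rho (nnn d w)))
  have h1 : nnn d w ≤ w := by
    by_contra hc
    have h2 : lam w (nnn d w) = ⊤ := by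
      rw [show lam w (nnn d w) = if nnn d w ≤ w then ⊥ else ⊤ from rfl, if_neg hc]
    have h3 : lam w (nnn d w) ≤ ⊥ := by
      rw [hw]
      rw [sSupHom.sSup_apply']
      exact iSup₂_le fun y hy => (nnn_char hcyc hd2 hT w y).mp hy
    rw [h2] at h3
    exact hT (le_bot_iff.mp h3)
  have h4 : w ≤ nnn d w := by
    by_contra hc
    have h5 : lam (nnn d w) ≤ lam w := by
      rw [hw]
      refine le_sSup ?_
      rw [Set.mem_setOf_eq, nnn_char hcyc hd2 hT w]
      rw [show lam (nnn d w) (nnn d w) = if nnn d w ≤ nnn d w then ⊥ else ⊤ from rfl,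
        if_pos le_rfl]
    have h6 := ptw_le h5 w
    rw [show lam (nnn d w) w = if w ≤ nnn d w then ⊥ else ⊤ from rfl, if_neg hc,
      show lam w w = if w ≤ w then ⊥ else ⊤ from rfl, if_pos le_rfl] at h6
    exact hT (le_bot_iff.mp h6)
  exact le_antisymm h1 h4

theorem delta_le_d : ∀ x : S, delta x ≤ d x := by
  intro x
  refine sSup_le fun s hs => ?_
  have h := nnn_eq hcyc hd2 hT s
  calc s = nnn d s := h.symm
    _ = ⨅ z ∈ {z : S | ¬ z ≤ s}, d z := rfl
    _ ≤ d x := iInf₂_le x (show ¬ x ≤ s from hs)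

theorem dens_of_dualizing' : Dens S := by
  intro w
  set σ : sSupHom S S := sSup (Set.range fun y : S => rho (sInf {z : S | ¬ z ≤ y}) * lam y)
    with hσ
  have key : ∀ γ : sSupHom S S, γ * σ ≤ d → γ ≤ d := by
    intro γ hγ
    have hy : ∀ y : S, γ (sInf {z : S | ¬ z ≤ y}) ≤ y := by
      intro y
      have h1 : γ * (rho (sInf {z : S | ¬ z ≤ y}) * lam y) ≤ d := by
        refine le_trans ?_ hγ
        refine le_ptw fun x => ?_
        refine OrderHomClass.mono γ (ptw_le (le_sSup ?_) x)
        exact ⟨y, rfl⟩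
      have h2 : γ (sInf {z : S | ¬ z ≤ y}) ≤ nnn d y := by
        refine le_iInf₂ fun z hz => ?_
        have h3 := ptw_le h1 z
        rw [show (γ * (rho (sInf {z : S | ¬ z ≤ y}) * lam y)) z
            = γ (rho _ (if z ≤ y then ⊥ else ⊤)) from rfl, if_neg hz] at h3
        rw [show (rho (sInf {z : S | ¬ z ≤ y}) (⊤:S))
            = if (⊤:S) = ⊥ then ⊥ else _ from rfl, if_neg hT] at h3
        exact h3
      rwa [nnn_eq hcyc hd2 hT] at h2
    refine le_ptw fun x => ?_
    have h4 : x ≤ sInf {z : S | ¬ z ≤ d x} := by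
      refine le_sInf fun z hz => ?_
      have h5 : ¬ z ≤ delta x := fun h => hz (h.trans (delta_le_d hcyc hd2 hT x))
      exact le_of_not_le_delta h5
    exact (OrderHomClass.mono γ h4).trans (hy (d x))
  have hPσ : Pd d σ ≤ d := by
    rw [Pd, hset hcyc hd2]
    exact sSup_le fun γ hγ => key γ hγ
  have hid : sSupHom.id S ≤ σ := by
    have h := Pd_antitone (d := d) hPσ
    rwa [Pd_d hcyc hd2, hPP hcyc hd2] at h
  have h6 : w ≤ σ w := by
    have := ptw_le hid w
    rwa [show (sSupHom.id S) w = w from rfl] at this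
  refine h6.trans ?_
  rw [sSupHom.sSup_apply']
  refine iSup₂_le ?_
  rintro g ⟨y, rfl⟩
  show rho (sInf {z : S | ¬ z ≤ y}) (if w ≤ y then ⊥ else ⊤) ≤ _
  by_cases hwy : w ≤ y
  · rw [if_pos hwy]
    show (if (⊥:S) = ⊥ then ⊥ else _) ≤ _
    rw [if_pos rfl]
    exact bot_le
  · rw [if_neg hwy]
    show (if (⊤:S) = ⊥ then ⊥ else _) ≤ _
    rw [if_neg hT]
    refine le_sSup ?_
    show TB _ w
    intro A hA
    obtain ⟨c, hcA, hc⟩ : ∃ c ∈ A, ¬ c ≤ y := by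
      by_contra hcc
      push_neg at hcc
      exact hwy (hA.trans (sSup_le hcc))
    exact ⟨c, hcA, sInf_le hc⟩

end hd
end AuxProof2

/-- `Q(S)` is a Girard quantale (with cyclic dualizing element `δ = φ(d)`)
if and only if `S` is completely distributive. -/
theorem stmt16 {S : Type u} [CompleteLattice S] :
    ((∀ (J K : Type u) (α : J → K → S),
        ⨅ j, ⨆ k, α j k = ⨆ f : J → K, ⨅ j, α j (f j)) →
      IsCyclicDualizing (delta : sSupHom S S)) ∧
    ((∃ d : sSupHom S S, IsCyclicDualizing d) →
      (∀ (J K : Type u) (α : J → K → S),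
        ⨅ j, ⨆ k, α j k = ⨆ f : J → K, ⨅ j, α j (f j))) := by
  constructor
  · intro H
    exact part1 (dens_of_H H)
  · rintro ⟨d, hd⟩ J K α
    by_cases hT : (⊤ : S) = ⊥
    · have hall : ∀ x y : S, x = y := fun x y =>
        le_antisymm ((le_top.trans hT.le).trans bot_le) ((le_top.trans hT.le).trans bot_le)
      exact hall _ _
    · exact cd_of_dens (dens_of_dualizing' hd.1 hd.2.1 hT) J K α
end

section
/- For every complete lattice S there exists a Girard quantale G whose right-sided part is order-isomorphic to S and whose left-sided part is order-isomorphic to S^op. -/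
/-!
Phase semantics. In a monoid `M` with a subset `D` such that `x * y ∈ D ↔ y * x ∈ D`, let
`X^⊥ = {w | ∀ x ∈ X, x * w ∈ D}`. The facts `X = X^⊥⊥` form a Girard quantale under
`A ⊗ B = (A * B)^⊥⊥`, with dualizing element `D = {1}^⊥`; multiplication has residuals, hence
preserves joins. The involution `A ↦ A^⊥` reverses order and exchanges left- and right-sided
facts, so the left-sided part is dual to the right-sided part.

For a complete lattice `S`, take `M = {0, 1} ∪ S × S` where `(a, l) * (b, m)` is `0` if `b ≤ l`
and `(a, m)` otherwise, and `D = {0, 1} ∪ {(a, l) | a ≤ l}`. The right-sided facts are exactly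
the polars `{(⊤, s)}^⊥`, and `s` is recovered from such a fact `r` as the join of all `a` with
`(a, ⊥) ∈ r`: this join again lies in `r`, and the fact generated by `(s, ⊥)` is `{(⊤, s)}^⊥`.
-/

open Pointwise OrderDual

structure CyclicPhaseSpace (M : Type*) [Monoid M] where
  dualizing : Set M
  mul_mem_dualizing_comm : ∀ x y : M, x * y ∈ dualizing ↔ y * x ∈ dualizing

namespace CyclicPhaseSpace

variable {M : Type*} [Monoid M] (P : CyclicPhaseSpace M)

def polar (X : Set M) : Set M := {w | ∀ x ∈ X, x * w ∈ P.dualizing}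

variable {P} in
lemma mem_polar {X : Set M} {w : M} : w ∈ P.polar X ↔ ∀ x ∈ X, x * w ∈ P.dualizing := Iff.rfl

lemma subset_polar_comm {X Y : Set M} : X ⊆ P.polar Y ↔ Y ⊆ P.polar X :=
  ⟨fun h _ hy _ hx => (P.mul_mem_dualizing_comm _ _).1 (h hx _ hy),
    fun h _ hx _ hy => (P.mul_mem_dualizing_comm _ _).1 (h hy _ hx)⟩

lemma gc_polar : GaloisConnection (toDual ∘ P.polar) (P.polar ∘ ofDual) :=
  fun _ _ => P.subset_polar_comm

def closure : ClosureOperator (Set M) := P.gc_polar.closureOperator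

lemma closure_apply (X : Set M) : P.closure X = P.polar (P.polar X) := rfl

lemma isClosed_polar (X : Set M) : P.closure.IsClosed (P.polar X) :=
  P.closure.isClosed_iff.2 (P.gc_polar.l_u_l_eq_l X)

abbrev Fact := P.closure.Closeds

noncomputable instance : CompleteLattice P.Fact := P.closure.gi.liftCompleteLattice

variable {P}

lemma Fact.mem_iff {A : P.Fact} {x : M} : x ∈ (A : Set M) ↔ x ∈ P.polar (P.polar A) := by
  rw [← closure_apply, A.2.closure_eq]

variable (P) in
def polarFact (A : P.Fact) : P.Fact := ⟨P.polar A, P.isClosed_polar A⟩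

lemma polarFact_polarFact (A : P.Fact) : P.polarFact (P.polarFact A) = A :=
  Subtype.ext A.2.closure_eq

lemma polarFact_le_polarFact_iff {A B : P.Fact} : P.polarFact A ≤ P.polarFact B ↔ B ≤ A := by
  refine ⟨fun h => ?_, fun h => P.gc_polar.monotone_l h⟩
  rw [← P.polarFact_polarFact A, ← P.polarFact_polarFact B]
  exact P.gc_polar.monotone_l h

noncomputable instance : Mul P.Fact := ⟨fun A B => P.closure.toCloseds (A * B : Set M)⟩

lemma mul_le_iff {A B C : P.Fact} :
    A * B ≤ C ↔ ∀ a ∈ (A : Set M), ∀ b ∈ (B : Set M), a * b ∈ (C : Set M) :=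
  (P.closure.gi.gc _ C).trans Set.mul_subset_iff

lemma mem_polar_mul {X Y : Set M} {w : M} :
    w ∈ P.polar (X * Y) ↔ ∀ x ∈ X, ∀ y ∈ Y, x * y * w ∈ P.dualizing :=
  Set.mul_subset_iff

variable (P) in
def rightResidual (A C : P.Fact) : P.Fact := ⟨P.polar (P.polar C * A), P.isClosed_polar _⟩

variable (P) in
def leftResidual (B C : P.Fact) : P.Fact := ⟨P.polar (B * P.polar C), P.isClosed_polar _⟩

lemma mem_rightResidual {A C : P.Fact} {w : M} :
    w ∈ (P.rightResidual A C : Set M) ↔ ∀ a ∈ (A : Set M), a * w ∈ (C : Set M) := by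
  rw [rightResidual, mem_polar_mul, forall₂_comm]
  refine forall₂_congr fun a _ => ?_
  rw [Fact.mem_iff (A := C)]
  exact forall₂_congr fun e _ => by rw [mul_assoc]

lemma mem_leftResidual {B C : P.Fact} {w : M} :
    w ∈ (P.leftResidual B C : Set M) ↔ ∀ b ∈ (B : Set M), w * b ∈ (C : Set M) := by
  rw [leftResidual, mem_polar_mul]
  refine forall₂_congr fun b _ => ?_
  rw [Fact.mem_iff (A := C)]
  refine forall₂_congr fun e _ => ?_
  rw [← mul_assoc, P.mul_mem_dualizing_comm (e * w), mul_assoc]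

lemma gc_mul_rightResidual (A : P.Fact) : GaloisConnection (A * ·) (P.rightResidual A) :=
  fun _ _ => mul_le_iff.trans <| forall₂_comm.trans <| forall₂_congr fun _ _ =>
    mem_rightResidual.symm

lemma gc_mul_leftResidual (B : P.Fact) : GaloisConnection (· * B) (P.leftResidual B) :=
  fun _ _ => mul_le_iff.trans <| forall₂_congr fun _ _ => mem_leftResidual.symm

lemma mul_mul_le_iff {A B C X : P.Fact} : A * B * C ≤ X ↔
    ∀ a ∈ (A : Set M), ∀ b ∈ (B : Set M), ∀ c ∈ (C : Set M), a * b * c ∈ (X : Set M) :=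
  (gc_mul_leftResidual C).le_iff_le.trans <| mul_le_iff.trans <|
    forall₂_congr fun _ _ => forall₂_congr fun _ _ => mem_leftResidual

lemma mul_mul_le_iff' {A B C X : P.Fact} : A * (B * C) ≤ X ↔
    ∀ a ∈ (A : Set M), ∀ b ∈ (B : Set M), ∀ c ∈ (C : Set M), a * (b * c) ∈ (X : Set M) :=
  (gc_mul_rightResidual A).le_iff_le.trans <| mul_le_iff.trans
    ⟨fun h a ha b hb c hc => mem_rightResidual.1 (h b hb c hc) a ha,
      fun h b hb c hc => mem_rightResidual.2 fun a ha => h a ha b hb c hc⟩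

noncomputable instance : Quantale' P.Fact where
  mul_assoc A B C := eq_of_forall_ge_iff fun X => by
    simp only [mul_mul_le_iff, mul_mul_le_iff', mul_assoc]
  mul_sSup A _ := (gc_mul_rightResidual A).l_sSup
  sSup_mul _ B := (gc_mul_leftResidual B).l_sSup

lemma polar_one : P.polar {1} = P.dualizing := by
  ext w
  simp [mem_polar]

variable (P) in
def dualizingFact : P.Fact := ⟨P.dualizing, polar_one (P := P) ▸ P.isClosed_polar {1}⟩

lemma mul_le_dualizingFact_iff {A B : P.Fact} : A * B ≤ P.dualizingFact ↔ B ≤ P.polarFact A :=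
  mul_le_iff.trans forall₂_comm

lemma mul_le_dualizingFact_comm {A B : P.Fact} :
    A * B ≤ P.dualizingFact ↔ B * A ≤ P.dualizingFact := by
  rw [mul_le_dualizingFact_iff, mul_le_dualizingFact_iff]
  exact P.subset_polar_comm

theorem isCyclicDualizing_dualizingFact : IsCyclicDualizing P.dualizingFact := by
  have right (A : P.Fact) : {B | A * B ≤ P.dualizingFact} = Set.Iic (P.polarFact A) :=
    Set.ext fun _ => mul_le_dualizingFact_iff
  have left (A : P.Fact) : {B | B * A ≤ P.dualizingFact} = Set.Iic (P.polarFact A) :=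
    Set.ext fun _ => mul_le_dualizingFact_comm.trans mul_le_dualizingFact_iff
  refine ⟨fun _ _ => mul_le_dualizingFact_comm, fun A => ?_, fun A => ?_⟩
  · rw [right, csSup_Iic, left, csSup_Iic, polarFact_polarFact]
  · rw [left, csSup_Iic, right, csSup_Iic, polarFact_polarFact]

lemma coe_top : ((⊤ : P.Fact) : Set M) = Set.univ :=
  Set.univ_subset_iff.1 <|
    le_top (a := (⟨Set.univ, P.closure.isClosed_iff.2 P.closure.closure_top⟩ : P.Fact))

lemma mul_top_le_iff {A : P.Fact} :
    A * ⊤ ≤ A ↔ ∀ a ∈ (A : Set M), ∀ m : M, a * m ∈ (A : Set M) := by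
  simp only [mul_le_iff, coe_top, Set.mem_univ, true_imp_iff]

lemma top_mul_le_iff {A : P.Fact} :
    ⊤ * A ≤ A ↔ ∀ m : M, ∀ a ∈ (A : Set M), m * a ∈ (A : Set M) := by
  simp only [mul_le_iff, coe_top, Set.mem_univ, true_imp_iff]

lemma polarFact_mul_top_le {A : P.Fact} (h : ⊤ * A ≤ A) : P.polarFact A * ⊤ ≤ P.polarFact A :=
  mul_top_le_iff.2 fun w hw m a ha => by
    rw [← mul_assoc, P.mul_mem_dualizing_comm, ← mul_assoc]
    exact hw _ (top_mul_le_iff.1 h m a ha)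

lemma top_mul_polarFact_le {A : P.Fact} (h : A * ⊤ ≤ A) : ⊤ * P.polarFact A ≤ P.polarFact A :=
  top_mul_le_iff.2 fun m w hw a ha => by
    rw [← mul_assoc]
    exact hw _ (mul_top_le_iff.1 h a ha m)

variable (P) in
def leftSidedOrderIsoRightSided :
    {l : P.Fact // ⊤ * l ≤ l} ≃o {r : P.Fact // r * ⊤ ≤ r}ᵒᵈ where
  toFun l := toDual ⟨P.polarFact l, polarFact_mul_top_le l.2⟩
  invFun r := ⟨P.polarFact (ofDual r).1, top_mul_polarFact_le (ofDual r).2⟩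
  left_inv l := Subtype.ext (polarFact_polarFact l.1)
  right_inv r := congrArg toDual (Subtype.ext (polarFact_polarFact (ofDual r).1))
  map_rel_iff' := polarFact_le_polarFact_iff

end CyclicPhaseSpace

inductive PairMonoid (S : Type*)
  | zero : PairMonoid S
  | one : PairMonoid S
  | pair : S → S → PairMonoid S

namespace PairMonoid

variable {S : Type*}

instance : One (PairMonoid S) := ⟨one⟩

section LE

variable [LE S]

open Classical in
noncomputable instance : Mul (PairMonoid S) where
  mul
    | zero, _ => zero
    | _, zero => zero
    | one, y => y
    | x, one => x
    | pair a l, pair b m => if b ≤ l then zero else pair a m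

@[simp] lemma zero_mul_eq (x : PairMonoid S) : zero * x = zero := by cases x <;> rfl
@[simp] lemma mul_zero_eq (x : PairMonoid S) : x * zero = zero := by cases x <;> rfl

@[simp] lemma one_mul_eq (x : PairMonoid S) : one * x = x := by cases x <;> rfl
@[simp] lemma mul_one_eq (x : PairMonoid S) : x * one = x := by cases x <;> rfl

open Classical in
lemma pair_mul_pair (a l b m : S) :
    pair a l * pair b m = if b ≤ l then zero else pair a m := rfl

noncomputable instance : Monoid (PairMonoid S) where
  mul_assoc x y z := by
    rcases x with _ | _ | ⟨a, l⟩ <;> rcases y with _ | _ | ⟨b, m⟩ <;>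
      rcases z with _ | _ | ⟨c, n⟩ <;>
      simp only [zero_mul_eq, mul_zero_eq, one_mul_eq, mul_one_eq, pair_mul_pair]
    split_ifs <;> simp_all [pair_mul_pair]
  one_mul := one_mul_eq
  mul_one := mul_one_eq

def dualizing : Set (PairMonoid S)
  | pair a l => a ≤ l
  | _ => True

@[simp] lemma zero_mem_dualizing : (zero : PairMonoid S) ∈ dualizing := trivial
@[simp] lemma one_mem_dualizing : (one : PairMonoid S) ∈ dualizing := trivial
@[simp] lemma pair_mem_dualizing {a l : S} : pair a l ∈ dualizing ↔ a ≤ l := Iff.rfl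

@[simp] lemma pair_mul_pair_mem_dualizing {a l b m : S} :
    pair a l * pair b m ∈ dualizing ↔ b ≤ l ∨ a ≤ m := by
  rw [pair_mul_pair]
  split_ifs with h <;> simp [h]

variable (S) in
def phaseSpace : CyclicPhaseSpace (PairMonoid S) where
  dualizing := dualizing
  mul_mem_dualizing_comm x y := by
    rcases x with _ | _ | ⟨a, l⟩ <;> rcases y with _ | _ | ⟨b, m⟩ <;> simp [or_comm]

end LE

variable [CompleteLattice S]

open CyclicPhaseSpace

def rightFact (s : S) : (phaseSpace S).Fact :=
  ⟨(phaseSpace S).polar {pair ⊤ s}, (phaseSpace S).isClosed_polar _⟩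

lemma mem_rightFact {s : S} {x : PairMonoid S} :
    x ∈ (rightFact s : Set (PairMonoid S)) ↔ pair ⊤ s * x ∈ dualizing := by
  simp [rightFact, mem_polar, phaseSpace]

lemma rightFact_mul_top_le (s : S) : rightFact s * ⊤ ≤ rightFact s := by
  refine mul_top_le_iff.2 fun x hx m => ?_
  rw [mem_rightFact] at hx ⊢
  rcases x with _ | _ | ⟨a, l⟩ <;> rcases m with _ | _ | ⟨b, n⟩ <;> simp_all
  rw [pair_mul_pair]
  split_ifs with hb
  · simp
  · rcases hx with ha | rfl
    · simp [ha]
    · exact absurd le_top hb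

lemma mul_mem_dualizing_of_mem_rightFact {s : S} {x e : PairMonoid S}
    (hx : x ∈ (rightFact s : Set (PairMonoid S))) (he : pair s ⊥ * e ∈ dualizing) :
    e * x ∈ dualizing := by
  rw [mem_rightFact] at hx
  rcases x with _ | _ | ⟨a, l⟩ <;> rcases e with _ | _ | ⟨b, n⟩ <;> simp_all
  · rcases he with rfl | rfl <;> simp
  · rcases hx with rfl | rfl <;> simp
  · rcases hx with ha | rfl
    · exact he.imp (fun hb => hb ▸ bot_le) ha.trans |>.symm
    · exact Or.inr le_top

lemma rightFact_le_iff_pair_mem {s : S} {r : (phaseSpace S).Fact} :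
    rightFact s ≤ r ↔ pair s ⊥ ∈ (r : Set (PairMonoid S)) := by
  refine ⟨fun h => h (mem_rightFact.2 (by simp)), fun h x hx => ?_⟩
  exact Fact.mem_iff.2 fun e he => mul_mem_dualizing_of_mem_rightFact hx (he _ h)

lemma rightFact_le_rightFact_iff {s t : S} : rightFact s ≤ rightFact t ↔ s ≤ t := by
  rw [rightFact_le_iff_pair_mem, mem_rightFact, pair_mul_pair_mem_dualizing]
  exact or_iff_left_of_imp fun h => (le_top.trans h).trans bot_le

lemma pair_sSup_mul_mem_dualizing {A : Set S} {w : PairMonoid S}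
    (h : ∀ a ∈ A, pair a ⊥ * w ∈ dualizing) : pair (sSup A) ⊥ * w ∈ dualizing := by
  rcases w with _ | _ | ⟨c, v⟩
  · simp
  · simpa using h
  · simp only [pair_mul_pair_mem_dualizing] at h ⊢
    by_cases hc : c ≤ ⊥
    · exact Or.inl hc
    · exact Or.inr (sSup_le fun a ha => (h a ha).resolve_left hc)

lemma pair_sSup_mem (r : (phaseSpace S).Fact) :
    pair (sSup {a | pair a ⊥ ∈ (r : Set (PairMonoid S))}) ⊥ ∈ (r : Set (PairMonoid S)) :=
  Fact.mem_iff.2 fun _ he =>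
    ((phaseSpace S).mul_mem_dualizing_comm _ _).1 (pair_sSup_mul_mem_dualizing fun _ ha => he _ ha)

lemma le_rightFact_of_mul_top_le {r : (phaseSpace S).Fact} (h : r * ⊤ ≤ r) :
    r ≤ rightFact (sSup {a | pair a ⊥ ∈ (r : Set (PairMonoid S))}) := by
  intro x hx
  have hx' := mul_top_le_iff.1 h x hx (pair ⊤ ⊥)
  rw [mem_rightFact]
  rcases x with _ | _ | ⟨a, v⟩
  · simp
  · simp only [one_mul_eq, mul_one_eq, pair_mem_dualizing] at hx' ⊢
    exact le_sSup (α := S) hx'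
  · rw [pair_mul_pair_mem_dualizing, or_comm]
    refine or_iff_not_imp_left.2 fun hv => le_sSup (α := S) ?_
    rwa [pair_mul_pair, if_neg hv] at hx'

lemma eq_rightFact_of_mul_top_le {r : (phaseSpace S).Fact} (h : r * ⊤ ≤ r) :
    r = rightFact (sSup {a | pair a ⊥ ∈ (r : Set (PairMonoid S))}) :=
  le_antisymm (le_rightFact_of_mul_top_le h) (rightFact_le_iff_pair_mem.2 (pair_sSup_mem r))

variable (S) in
noncomputable def rightSidedOrderIso : S ≃o {r : (phaseSpace S).Fact // r * ⊤ ≤ r} :=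
  OrderIso.ofSurjective
    (OrderEmbedding.ofMapLEIff (fun s => ⟨rightFact s, rightFact_mul_top_le s⟩)
      fun _ _ => rightFact_le_rightFact_iff)
    fun r => ⟨_, Subtype.ext (eq_rightFact_of_mul_top_le r.2).symm⟩

end PairMonoid

/-- For every complete lattice `S` there is a Girard quantale whose right-sided
part is isomorphic to `S` and whose left-sided part is isomorphic to `S^op`. -/
theorem stmt18 (S : Type u) [CompleteLattice S] :
    ∃ (G : Type u) (_ : Quantale' G) (d : G),
      IsCyclicDualizing d ∧
      Nonempty ({r : G // r * ⊤ ≤ r} ≃o S) ∧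
      Nonempty ({l : G // ⊤ * l ≤ l} ≃o Sᵒᵈ) :=
  ⟨_, inferInstance, (PairMonoid.phaseSpace S).dualizingFact,
    CyclicPhaseSpace.isCyclicDualizing_dualizingFact,
    ⟨(PairMonoid.rightSidedOrderIso S).symm⟩,
    ⟨(PairMonoid.phaseSpace S).leftSidedOrderIsoRightSided.trans
      (PairMonoid.rightSidedOrderIso S).symm.dual⟩⟩
end
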